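/- arXiv:2511.18949 — 5 statements merged into one kernel-verified Lean document; each statement's English description precedes it below -/
import Mathlib

section
/- There exists a dimensional constant C_n > 0 such that for every nonconstant locally integrable function f : ℝⁿ → ℝ, every cube Q ⊂ ℝⁿ and every 1 ≤ p < ∞, one has ( (1/|Q|) ∫_Q ( M((f − f_Q) χ_Q)(x) / M^# f(x) )^p dx )^{1/p} ≤ C_n · p. -/
open MeasureTheory ENNReal

noncomputable section

/-- An axis-parallel cube in `ℝⁿ` with positive side length. -/
def IsCube {n : ℕ} (Q : Set (Fin n → ℝ)) : Prop :=
  ∃ (a : Fin n → ℝ) (l : ℝ), 0 < l ∧ Q = Set.univ.pi fun i => Set.Icc (a i) (a i + l)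

/-- The (uncentered) Hardy–Littlewood maximal function over axis-parallel cubes,
`Mf(x) = sup_{Q ∋ x} (1/|Q|) ∫_Q |f|`. -/
def mxF {n : ℕ} (f : (Fin n → ℝ) → ℝ) (x : Fin n → ℝ) : ℝ≥0∞ :=
  ⨆ (Q : Set (Fin n → ℝ)) (_ : IsCube Q) (_ : x ∈ Q),
    (volume Q)⁻¹ * ∫⁻ y in Q, ENNReal.ofReal |f y|

/-- The average `f_Q = (1/|Q|) ∫_Q f`. -/
def avg {n : ℕ} (f : (Fin n → ℝ) → ℝ) (Q : Set (Fin n → ℝ)) : ℝ :=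
  (volume Q).toReal⁻¹ * ∫ y in Q, f y

/-- The Fefferman–Stein sharp maximal function
`M^♯ f(x) = sup_{Q ∋ x} (1/|Q|) ∫_Q |f - f_Q|`. -/
def sharp {n : ℕ} (f : (Fin n → ℝ) → ℝ) (x : Fin n → ℝ) : ℝ≥0∞ :=
  ⨆ (Q : Set (Fin n → ℝ)) (_ : IsCube Q) (_ : x ∈ Q),
    (volume Q)⁻¹ * ∫⁻ y in Q, ENNReal.ofReal |f y - avg f Q|

/-- The BMO seminorm `‖f‖_BMO = sup_Q (1/|Q|) ∫_Q |f - f_Q|`. -/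
def bmo {n : ℕ} (f : (Fin n → ℝ) → ℝ) : ℝ≥0∞ :=
  ⨆ (Q : Set (Fin n → ℝ)) (_ : IsCube Q),
    (volume Q)⁻¹ * ∫⁻ y in Q, ENNReal.ofReal |f y - avg f Q|

/-- The measure `w(E) = ∫_E w(x) dx` of a set with respect to a weight `w`. -/
def wMeas {n : ℕ} (w : (Fin n → ℝ) → ℝ) (E : Set (Fin n → ℝ)) : ℝ≥0∞ :=
  ∫⁻ x in E, ENNReal.ofReal (w x)

/-- The Fujii–Wilson `A_∞` constant
`[w]_{A_∞} = sup_Q (1/w(Q)) ∫_Q M(w χ_Q)`;  `w ∈ A_∞` means this is finite. -/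
def fujiiWilson {n : ℕ} (w : (Fin n → ℝ) → ℝ) : ℝ≥0∞ :=
  ⨆ (Q : Set (Fin n → ℝ)) (_ : IsCube Q),
    (wMeas w Q)⁻¹ * ∫⁻ x in Q, mxF (Q.indicator w) x

namespace Stmt9

open Metric Set MeasureTheory ENNReal

variable {n : ℕ}

/-- cubes are exactly closed balls of positive radius in the sup metric -/
theorem isCube_closedBall (c : Fin n → ℝ) {r : ℝ} (hr : 0 < r) :
    IsCube (Metric.closedBall c r) := by
  refine ⟨fun i => c i - r, 2 * r, by linarith, ?_⟩
  rw [closedBall_pi _ hr.le]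
  apply congrArg (Set.pi Set.univ)
  funext i
  rw [Real.closedBall_eq_Icc]
  congr 1 <;> ring

theorem isCube_iff {Q : Set (Fin n → ℝ)} :
    IsCube Q ↔ ∃ (c : Fin n → ℝ) (r : ℝ), 0 < r ∧ Q = Metric.closedBall c r := by
  constructor
  · rintro ⟨a, l, hl, rfl⟩
    refine ⟨fun i => a i + l / 2, l / 2, by linarith, ?_⟩
    rw [closedBall_pi _ (by linarith : (0:ℝ) ≤ l / 2)]
    apply congrArg (Set.pi Set.univ)
    funext i
    rw [Real.closedBall_eq_Icc]
    congr 1 <;> ring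
  · rintro ⟨c, r, hr, rfl⟩
    exact isCube_closedBall c hr

theorem volume_cb (c : Fin n → ℝ) {r : ℝ} (hr : 0 ≤ r) :
    volume (Metric.closedBall c r) = ENNReal.ofReal ((2 * r) ^ n) := by
  rw [closedBall_pi _ hr, volume_pi_pi]
  simp only [Real.closedBall_eq_Icc, Real.volume_Icc]
  rw [Finset.prod_congr rfl (fun i _ => by rw [show c i + r - (c i - r) = 2 * r by ring]),
    Finset.prod_const, ENNReal.ofReal_pow (by linarith)]
  simp

theorem volume_cb_pos (c : Fin n → ℝ) {r : ℝ} (hr : 0 < r) :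
    0 < volume (Metric.closedBall c r) := by
  rw [volume_cb c hr.le]
  exact ENNReal.ofReal_pos.2 (by positivity)

theorem volume_cb_lt_top (c : Fin n → ℝ) (r : ℝ) :
    volume (Metric.closedBall c r) < ⊤ := by
  rcases le_or_gt r 0 with h | h
  · rcases lt_or_eq_of_le h with h' | h'
    · simp [Metric.closedBall_eq_empty.2 h']
    · rw [h', volume_cb c le_rfl]; simp [ENNReal.ofReal_lt_top]
  · rw [volume_cb c h.le]; exact ENNReal.ofReal_lt_top

theorem cube_vol_pos {Q : Set (Fin n → ℝ)} (hQ : IsCube Q) : 0 < volume Q := by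
  obtain ⟨c, r, hr, rfl⟩ := isCube_iff.1 hQ
  exact volume_cb_pos c hr

theorem cube_vol_lt_top {Q : Set (Fin n → ℝ)} (hQ : IsCube Q) : volume Q < ⊤ := by
  obtain ⟨c, r, hr, rfl⟩ := isCube_iff.1 hQ
  exact volume_cb_lt_top c r

/-- comparison of radii from comparison of volumes (needs `n > 0`) -/
theorem radius_le_of_volume_le (hn : 0 < n) {r R : ℝ} (hr : 0 < r) (hR : 0 < R)
    (c c' : Fin n → ℝ)
    (h : volume (Metric.closedBall c r) ≤ volume (Metric.closedBall c' R)) : r ≤ R := by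
  rw [volume_cb c hr.le, volume_cb c' hR.le,
    ENNReal.ofReal_le_ofReal_iff (by positivity)] at h
  have := (pow_le_pow_iff_left₀ (by linarith : (0:ℝ) ≤ 2*r) (by linarith : (0:ℝ) ≤ 2*R)
    (by omega : n ≠ 0)).1 h
  linarith

theorem integrableOn_cube {f : (Fin n → ℝ) → ℝ} (hf : LocallyIntegrable f volume)
    {Q : Set (Fin n → ℝ)} (hQ : IsCube Q) : IntegrableOn f Q volume := by
  obtain ⟨c, r, hr, rfl⟩ := isCube_iff.1 hQ
  exact hf.integrableOn_isCompact (isCompact_closedBall c r)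

theorem lintegral_abs_sub_lt_top {f : (Fin n → ℝ) → ℝ} (hf : LocallyIntegrable f volume)
    {Q : Set (Fin n → ℝ)} (hQ : IsCube Q) (a : ℝ) :
    ∫⁻ y in Q, ENNReal.ofReal |f y - a| < ⊤ := by
  have h1 : IntegrableOn (fun y => f y - a) Q volume :=
    (integrableOn_cube hf hQ).sub (integrableOn_const (cube_vol_lt_top hQ).ne)
  have h2 := h1.2
  rw [hasFiniteIntegral_iff_norm] at h2
  simpa [Real.norm_eq_abs] using h2

end Stmt9
namespace Stmt9

open Metric Set MeasureTheory ENNReal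

variable {n : ℕ}

/-- the ENNReal-valued local oscillation integrand `χ_P(z)·|f z − f_P|` -/
def hh (f : (Fin n → ℝ) → ℝ) (P : Set (Fin n → ℝ)) : (Fin n → ℝ) → ℝ≥0∞ :=
  P.indicator fun z => ENNReal.ofReal |f z - avg f P|

theorem ofReal_abs_indicator (P : Set (Fin n → ℝ)) (g : (Fin n → ℝ) → ℝ) (z : Fin n → ℝ) :
    ENNReal.ofReal |P.indicator g z| = P.indicator (fun w => ENNReal.ofReal |g w|) z := by
  by_cases hz : z ∈ P <;> simp [Set.indicator_apply, hz]

/-- the numerator maximal function rewritten through `hh` -/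
theorem mxF_indicator_eq (f : (Fin n → ℝ) → ℝ) (P : Set (Fin n → ℝ)) (x : Fin n → ℝ) :
    mxF (P.indicator fun z => f z - avg f P) x
      = ⨆ (S : Set (Fin n → ℝ)) (_ : IsCube S) (_ : x ∈ S),
          (volume S)⁻¹ * ∫⁻ z in S, hh f P z := by
  unfold mxF
  refine iSup_congr fun S => iSup_congr fun _ => iSup_congr fun _ => ?_
  congr 1
  exact lintegral_congr fun z => ofReal_abs_indicator P _ z

/-- `MP f P` : the maximal function of the localized oscillation. -/
def MP (f : (Fin n → ℝ) → ℝ) (P : Set (Fin n → ℝ)) (x : Fin n → ℝ) : ℝ≥0∞ :=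
  ⨆ (S : Set (Fin n → ℝ)) (_ : IsCube S) (_ : x ∈ S),
      (volume S)⁻¹ * ∫⁻ z in S, hh f P z

theorem le_MP {f : (Fin n → ℝ) → ℝ} {P S : Set (Fin n → ℝ)} (hS : IsCube S)
    {x : Fin n → ℝ} (hx : x ∈ S) :
    (volume S)⁻¹ * ∫⁻ z in S, hh f P z ≤ MP f P x := by
  unfold MP
  exact le_iSup_of_le S (le_iSup_of_le hS (le_iSup_of_le hx le_rfl))

theorem lt_MP_iff {f : (Fin n → ℝ) → ℝ} {P : Set (Fin n → ℝ)} {x : Fin n → ℝ} {a : ℝ≥0∞} :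
    a < MP f P x ↔ ∃ S, IsCube S ∧ x ∈ S ∧ a < (volume S)⁻¹ * ∫⁻ z in S, hh f P z := by
  unfold MP
  simp only [lt_iSup_iff]
  tauto

theorem le_sharp {f : (Fin n → ℝ) → ℝ} {S : Set (Fin n → ℝ)} (hS : IsCube S)
    {x : Fin n → ℝ} (hx : x ∈ S) :
    (volume S)⁻¹ * ∫⁻ z in S, ENNReal.ofReal |f z - avg f S| ≤ sharp f x := by
  unfold sharp
  exact le_iSup_of_le S (le_iSup_of_le hS (le_iSup_of_le hx le_rfl))

theorem setLintegral_hh_of_subset {f : (Fin n → ℝ) → ℝ} {P P' : Set (Fin n → ℝ)}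
    (hP' : MeasurableSet P') (hsub : P' ⊆ P) :
    ∫⁻ z in P', hh f P z = ∫⁻ z in P', ENNReal.ofReal |f z - avg f P| := by
  refine setLIntegral_congr_fun hP' (fun z hz => ?_)
  simp [hh, Set.indicator_of_mem (hsub hz)]

/-- key: distance of averages, ENNReal form. -/
theorem ofReal_abs_avg_sub_le {f : (Fin n → ℝ) → ℝ} (hf : LocallyIntegrable f volume)
    {P P' : Set (Fin n → ℝ)} (hP : IsCube P) (hP' : IsCube P') (hsub : P' ⊆ P) :
    ENNReal.ofReal |avg f P' - avg f P|
      ≤ (volume P')⁻¹ * ∫⁻ z in P', ENNReal.ofReal |f z - avg f P| := by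
  set c₀ := avg f P
  have hvol0 : volume P' ≠ 0 := (cube_vol_pos hP').ne'
  have hvolt : volume P' ≠ ⊤ := (cube_vol_lt_top hP').ne
  have hint : IntegrableOn (fun z => f z - c₀) P' volume :=
    ((integrableOn_cube hf hP).mono_set hsub).sub
      (integrableOn_const (cube_vol_lt_top hP').ne)
  have havg : avg f P' - c₀ = (volume P').toReal⁻¹ * ∫ z in P', (f z - c₀) := by
    rw [integral_sub ((integrableOn_cube hf hP).mono_set hsub)
      (integrableOn_const (cube_vol_lt_top hP').ne)]
    rw [setIntegral_const, smul_eq_mul, measureReal_def]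
    unfold avg
    have ht : (volume P').toReal ≠ 0 := by
      simp [ENNReal.toReal_ne_zero, hvol0, hvolt]
    field_simp
  have h1 : |avg f P' - c₀| ≤ (volume P').toReal⁻¹ * ∫ z in P', |f z - c₀| := by
    rw [havg, abs_mul, abs_of_nonneg (by positivity)]
    gcongr
    simpa [Real.norm_eq_abs] using
      norm_integral_le_integral_norm (μ := volume.restrict P') (f := fun z => f z - c₀)
  have h2 : ∫ z in P', |f z - c₀| = (∫⁻ z in P', ENNReal.ofReal |f z - c₀|).toReal := by
    rw [integral_eq_lintegral_of_nonneg_ae (Filter.Eventually.of_forall fun z => abs_nonneg _)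
      hint.abs.aestronglyMeasurable]
  calc ENNReal.ofReal |avg f P' - c₀|
      ≤ ENNReal.ofReal ((volume P').toReal⁻¹ * (∫⁻ z in P', ENNReal.ofReal |f z - c₀|).toReal) := by
        rw [← h2]; exact ENNReal.ofReal_le_ofReal h1
    _ = (volume P')⁻¹ * ∫⁻ z in P', ENNReal.ofReal |f z - c₀| := by
        rw [ENNReal.ofReal_mul (by positivity), ← ENNReal.toReal_inv,
          ENNReal.ofReal_toReal (by simp [hvol0]),
          ENNReal.ofReal_toReal (lintegral_abs_sub_lt_top hf hP' c₀).ne]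

end Stmt9
namespace Stmt9

open Metric Set MeasureTheory ENNReal

variable {n : ℕ}

theorem cube_measurableSet {Q : Set (Fin n → ℝ)} (hQ : IsCube Q) : MeasurableSet Q := by
  obtain ⟨c, r, _, rfl⟩ := isCube_iff.1 hQ
  exact measurableSet_closedBall

theorem setLintegral_hh_le (f : (Fin n → ℝ) → ℝ) {P : Set (Fin n → ℝ)} (hP : MeasurableSet P)
    (S : Set (Fin n → ℝ)) :
    ∫⁻ z in S, hh f P z ≤ ∫⁻ z in P, ENNReal.ofReal |f z - avg f P| := by
  calc ∫⁻ z in S, hh f P z ≤ ∫⁻ z, hh f P z := setLIntegral_le_lintegral _ _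
    _ = ∫⁻ z in P, ENNReal.ofReal |f z - avg f P| := lintegral_indicator hP _

/-- sliding a small cube inside a big cube, keeping the intersection -/
theorem slide (p : Fin n → ℝ) {R r : ℝ} (c : Fin n → ℝ) (hr : 0 < r) (hle : r ≤ R) :
    ∃ c', Metric.closedBall c' r ⊆ Metric.closedBall p R ∧
      Metric.closedBall c r ∩ Metric.closedBall p R ⊆ Metric.closedBall c' r := by
  refine ⟨fun i => max (p i - (R - r)) (min (c i) (p i + (R - r))), ?_, ?_⟩
  · intro z hz
    rw [mem_closedBall] at hz ⊢
    have h1 : dist (fun i => max (p i - (R - r)) (min (c i) (p i + (R - r)))) p ≤ R - r := by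
      rw [dist_pi_le_iff (by linarith)]
      intro i
      rw [Real.dist_eq, abs_le]
      have h1 := le_max_left (p i - (R - r)) (min (c i) (p i + (R - r)))
      refine ⟨by linarith, ?_⟩
      have h2 : max (p i - (R - r)) (min (c i) (p i + (R - r))) ≤ p i + (R - r) :=
        max_le (by linarith) (min_le_right _ _)
      linarith
    calc dist z p ≤ dist z _ + dist _ p := dist_triangle _ _ _
      _ ≤ r + (R - r) := add_le_add hz h1
      _ = R := by ring
  · rintro z ⟨hz1, hz2⟩
    rw [mem_closedBall] at hz1 hz2 ⊢
    rw [dist_pi_le_iff hr.le] at hz1 ⊢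
    rw [dist_pi_le_iff (by linarith : (0:ℝ) ≤ R)] at hz2
    intro i
    have h1 : |z i - c i| ≤ r := by rw [← Real.dist_eq]; exact hz1 i
    have h2 : |z i - p i| ≤ R := by rw [← Real.dist_eq]; exact hz2 i
    rw [abs_le] at h1 h2
    rw [Real.dist_eq, abs_le]
    rcases le_total (c i) (p i - (R - r)) with h | h
    · rw [min_eq_left (by linarith), max_eq_left h]
      constructor <;> linarith
    · rcases le_total (p i + (R - r)) (c i) with h3 | h3
      · rw [min_eq_right h3, max_eq_right (by linarith)]
        constructor <;> linarith
      · rw [min_eq_left h3, max_eq_right h]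
        constructor <;> linarith

/-- The dimensional constant of the good-λ induction. -/
def AA (n : ℕ) : ℝ≥0∞ := 2 * 13 ^ n

def CC (n : ℕ) : ℝ≥0∞ := 8 ^ n * AA n

theorem AA_ne_zero : AA n ≠ 0 := by simp [AA]
theorem AA_ne_top : AA n ≠ ⊤ := by
  unfold AA
  exact ENNReal.mul_ne_top (by norm_num) (ENNReal.pow_ne_top (by norm_num))
theorem one_le_AA : 1 ≤ AA n := by
  unfold AA
  calc (1:ℝ≥0∞) = 1 * 1 := (one_mul 1).symm
    _ ≤ 2 * 13 ^ n := by gcongr <;> [exact one_le_two; exact one_le_pow_of_one_le' (by norm_num) n]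
theorem AA_le_CC : AA n ≤ CC n := by
  unfold CC
  nth_rewrite 1 [← one_mul (AA n)]
  gcongr
  exact one_le_pow_of_one_le' (by norm_num) n
theorem CC_ne_zero : CC n ≠ 0 := by
  simp [CC, AA, pow_ne_zero]
theorem CC_ne_top : CC n ≠ ⊤ := by
  simp only [CC, AA]
  exact ENNReal.mul_ne_top (ENNReal.pow_ne_top (by norm_num))
    (ENNReal.mul_ne_top (by norm_num) (ENNReal.pow_ne_top (by norm_num)))

/-- The bad set at level `k`. -/
def Bad (f : (Fin n → ℝ) → ℝ) (P : Set (Fin n → ℝ)) (k : ℕ) : Set (Fin n → ℝ) :=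
  {y | y ∈ P ∧ CC n * ((k : ℝ≥0∞) + 1) * sharp f y < MP f P y}

end Stmt9
namespace Stmt9

open Metric Set MeasureTheory ENNReal

variable {n : ℕ}

theorem volume_cb_scale (c c' : Fin n → ℝ) {r m : ℝ} (hr : 0 ≤ r) (hm : 0 ≤ m) :
    volume (Metric.closedBall c' (m * r)) = ENNReal.ofReal (m ^ n) * volume (Metric.closedBall c r) := by
  rw [volume_cb _ (by positivity), volume_cb _ hr, ← ENNReal.ofReal_mul (by positivity)]
  congr 1; ring

theorem bad_bound (hn : 0 < n) {f : (Fin n → ℝ) → ℝ} (hf : LocallyIntegrable f volume) (k : ℕ) :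
    ∀ P : Set (Fin n → ℝ), IsCube P → volume (Bad f P k) ≤ (2:ℝ≥0∞)⁻¹ ^ k * volume P := by
  induction k with
  | zero =>
    intro P hP
    simpa using measure_mono (fun y (hy : y ∈ Bad f P 0) => hy.1)
  | succ k IH =>
    intro P hPc
    obtain ⟨p, rP, hrP, rfl⟩ := isCube_iff.1 hPc
    set P := Metric.closedBall p rP with hPdef
    have hP : IsCube P := isCube_closedBall p hrP
    have hPm : MeasurableSet P := cube_measurableSet hP
    set I := ∫⁻ z in P, ENNReal.ofReal |f z - avg f P| with hI_def
    have hIlt : I < ⊤ := lintegral_abs_sub_lt_top hf hP _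
    have hSle : ∀ S : Set (Fin n → ℝ), ∫⁻ z in S, hh f P z ≤ I :=
      fun S => setLintegral_hh_le f hPm S
    have hcast : ((k + 1 : ℕ) : ℝ≥0∞) = (k : ℝ≥0∞) + 1 := by push_cast; ring
    by_cases hI0 : I = 0
    · have hMP : ∀ y, MP f P y = 0 := by
        intro y
        refine le_antisymm ?_ zero_le
        refine iSup_le fun S => iSup_le fun _ => iSup_le fun _ => ?_
        have h1 := hSle S
        rw [hI0, le_zero_iff] at h1
        simp [h1]
      have hempty : Bad f P (k+1) = ∅ := by
        ext y
        simp only [Bad, mem_setOf_eq, mem_empty_iff_false, iff_false, not_and]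
        intro _
        rw [hMP y]
        simp
      rw [hempty]
      simp
    · -- main case
      have hvolP0 : volume P ≠ 0 := (cube_vol_pos hP).ne'
      have hvolPt : volume P ≠ ⊤ := (cube_vol_lt_top hP).ne
      set lam := AA n * ((volume P)⁻¹ * I) with hlam_def
      have hlam0 : lam ≠ 0 :=
        mul_ne_zero AA_ne_zero (mul_ne_zero (ENNReal.inv_ne_zero.2 hvolPt) hI0)
      have hlamt : lam ≠ ⊤ :=
        ENNReal.mul_ne_top AA_ne_top (ENNReal.mul_ne_top (ENNReal.inv_ne_top.2 hvolP0) hIlt.ne)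
      have hsharp_ge : ∀ y ∈ P, (volume P)⁻¹ * I ≤ sharp f y := fun y hy => le_sharp hP hy
      have hlamI : lam⁻¹ * I = (AA n)⁻¹ * volume P := by
        rw [hlam_def, ENNReal.mul_inv (Or.inl AA_ne_zero) (Or.inl AA_ne_top), mul_assoc]
        congr 1
        rw [ENNReal.mul_inv (Or.inl (ENNReal.inv_ne_zero.2 hvolPt)) (Or.inr hI0), inv_inv,
          mul_assoc, ENNReal.inv_mul_cancel hI0 hIlt.ne, mul_one]
      have hvol_le : ∀ S, IsCube S → lam < (volume S)⁻¹ * ∫⁻ z in S, hh f P z →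
          volume S ≤ (AA n)⁻¹ * volume P := by
        intro S hS hlt
        have hS0 : volume S ≠ 0 := (cube_vol_pos hS).ne'
        have hSt : volume S ≠ ⊤ := (cube_vol_lt_top hS).ne
        have h1 : lam * volume S ≤ ∫⁻ z in S, hh f P z := by
          calc lam * volume S ≤ ((volume S)⁻¹ * ∫⁻ z in S, hh f P z) * volume S :=
                mul_le_mul_left hlt.le _
            _ = ∫⁻ z in S, hh f P z := by
                rw [mul_comm ((volume S)⁻¹) _, mul_assoc, ENNReal.inv_mul_cancel hS0 hSt, mul_one]
        calc volume S = lam⁻¹ * (lam * volume S) := by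
              rw [← mul_assoc, ENNReal.inv_mul_cancel hlam0 hlamt, one_mul]
          _ ≤ lam⁻¹ * I := by exact mul_le_mul_right (h1.trans (hSle S)) _
          _ = (AA n)⁻¹ * volume P := hlamI
      have hAAinv_le_one : (AA n)⁻¹ ≤ 1 := by
        rw [ENNReal.inv_le_one]; exact one_le_AA
      -- choice of near-maximal cubes
      have hchoice : ∀ x ∈ Bad f P (k+1), ∃ (cc : Fin n → ℝ) (rr : ℝ), 0 < rr ∧
          x ∈ Metric.closedBall cc rr ∧
          lam < (volume (Metric.closedBall cc rr))⁻¹ * ∫⁻ z in Metric.closedBall cc rr, hh f P z ∧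
          ∀ S, IsCube S → x ∈ S → lam < (volume S)⁻¹ * ∫⁻ z in S, hh f P z →
            volume S < 2 * volume (Metric.closedBall cc rr) := by
        intro x hx
        obtain ⟨hxP, hxlt⟩ := hx
        have hlam_lt : lam < MP f P x := by
          refine lt_of_le_of_lt ?_ hxlt
          calc lam = AA n * ((volume P)⁻¹ * I) := hlam_def
            _ ≤ (CC n * (((k+1:ℕ) : ℝ≥0∞) + 1)) * sharp f x := by
                refine mul_le_mul' ?_ (hsharp_ge x hxP)
                refine AA_le_CC.trans ?_
                nth_rewrite 1 [← mul_one (CC n)]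
                exact mul_le_mul_right (by simp) _
        obtain ⟨S₀, hS₀c, hxS₀, hS₀avg⟩ := lt_MP_iff.1 hlam_lt
        have hwit : ∃ S, ∃ (_ : IsCube S) (_ : x ∈ S)
            (_ : lam < (volume S)⁻¹ * ∫⁻ z in S, hh f P z),
            (⨆ (S : Set (Fin n → ℝ)) (_ : IsCube S) (_ : x ∈ S)
              (_ : lam < (volume S)⁻¹ * ∫⁻ z in S, hh f P z), volume S) / 2 < volume S := by
          have hlt : (⨆ (S : Set (Fin n → ℝ)) (_ : IsCube S) (_ : x ∈ S)
              (_ : lam < (volume S)⁻¹ * ∫⁻ z in S, hh f P z), volume S) / 2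
              < ⨆ (S : Set (Fin n → ℝ)) (_ : IsCube S) (_ : x ∈ S)
              (_ : lam < (volume S)⁻¹ * ∫⁻ z in S, hh f P z), volume S := by
            refine ENNReal.half_lt_self ?_ ?_
            · refine fun h0 => (cube_vol_pos hS₀c).ne' (le_zero_iff.1 ?_)
              rw [← h0]
              exact le_iSup_of_le S₀ (le_iSup_of_le hS₀c (le_iSup_of_le hxS₀
                (le_iSup_of_le hS₀avg le_rfl)))
            · refine ne_of_lt (lt_of_le_of_lt ?_
                (lt_of_le_of_lt (mul_le_mul_left hAAinv_le_one (volume P)) ?_))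
              · refine iSup_le fun S => iSup_le fun hS => iSup_le fun _ => iSup_le fun hlt =>
                  hvol_le S hS hlt
              · rw [one_mul]; exact cube_vol_lt_top hP
          simpa only [lt_iSup_iff] using hlt
        obtain ⟨S₁, hS₁c, hxS₁, hS₁avg, hS₁vol⟩ := hwit
        obtain ⟨cc, rr, hrr, rfl⟩ := isCube_iff.1 hS₁c
        refine ⟨cc, rr, hrr, hxS₁, hS₁avg, ?_⟩
        intro S hS hxS hlt
        have h1 : volume S ≤ ⨆ (S : Set (Fin n → ℝ)) (_ : IsCube S) (_ : x ∈ S)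
            (_ : lam < (volume S)⁻¹ * ∫⁻ z in S, hh f P z), volume S :=
          le_iSup_of_le S (le_iSup_of_le hS (le_iSup_of_le hxS (le_iSup_of_le hlt le_rfl)))
        refine lt_of_le_of_lt h1 ?_
        calc (⨆ (S : Set (Fin n → ℝ)) (_ : IsCube S) (_ : x ∈ S)
              (_ : lam < (volume S)⁻¹ * ∫⁻ z in S, hh f P z), volume S)
            = (⨆ (S : Set (Fin n → ℝ)) (_ : IsCube S) (_ : x ∈ S)
              (_ : lam < (volume S)⁻¹ * ∫⁻ z in S, hh f P z), volume S) / 2 * 2 :=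
              (ENNReal.div_mul_cancel (by norm_num) (by norm_num)).symm
          _ < volume (Metric.closedBall cc rr) * 2 := by
              exact ENNReal.mul_lt_mul_left (by norm_num) (by norm_num) hS₁vol
          _ = 2 * volume (Metric.closedBall cc rr) := mul_comm _ _
      choose! cB cR hcR hcmem hcavg hcmax using hchoice
      have hrle : ∀ x ∈ Bad f P (k+1), cR x ≤ rP := by
        intro x hx
        refine radius_le_of_volume_le hn (hcR x hx) hrP (cB x) p ?_
        refine (hvol_le _ (isCube_closedBall _ (hcR x hx)) (hcavg x hx)).trans ?_
        calc (AA n)⁻¹ * volume P ≤ 1 * volume P := mul_le_mul_left hAAinv_le_one _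
          _ = volume (Metric.closedBall p rP) := one_mul _
      obtain ⟨u, huBad, hdisj, hcov⟩ := Vitali.exists_disjoint_subfamily_covering_enlargement
        (fun x => Metric.closedBall (cB x) (cR x)) (Bad f P (k+1)) cR 2 one_lt_two
        (fun x hx => (hcR x hx).le) rP hrle (fun x hx => ⟨x, hcmem x hx⟩)
      have hdisj' : Pairwise (Function.onFun Disjoint fun j : ↥u => Metric.closedBall (cB ↑j) (cR ↑j)) :=
        fun i j hij => hdisj i.2 j.2 (fun hc => hij (Subtype.ext hc))
      haveI hcnt' : Countable ↥u := by
        have hmeas : volume (⋃ j : ↥u, Metric.closedBall (cB ↑j) (cR ↑j)) ≠ ⊤ := by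
          refine ne_of_lt (lt_of_le_of_lt (measure_mono ?_) (volume_cb_lt_top p (3*rP)))
          refine iUnion_subset fun j => ?_
          intro z hz
          have hj := huBad j.2
          rw [mem_closedBall] at hz ⊢
          have h2 : dist (cB ↑j) (↑j : Fin n → ℝ) ≤ cR ↑j := by
            rw [dist_comm]; exact hcmem _ hj
          have h3 : dist (↑j : Fin n → ℝ) p ≤ rP := hj.1
          have h4 := hrle _ hj
          calc dist z p ≤ dist z (cB ↑j) + dist (cB ↑j) (↑j : Fin n → ℝ)
                + dist (↑j : Fin n → ℝ) p := dist_triangle4 _ _ _ _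
            _ ≤ 3 * rP := by linarith
        have hcnt := MeasureTheory.Measure.countable_meas_pos_of_disjoint_of_meas_iUnion_ne_top volume
          (fun j : ↥u => measurableSet_closedBall) hdisj' hmeas
        have huniv : {j : ↥u | 0 < volume (Metric.closedBall (cB ↑j) (cR ↑j))} = univ := by
          ext j
          simp [volume_cb_pos _ (hcR _ (huBad j.2))]
        rw [huniv] at hcnt
        exact countable_univ_iff.1 hcnt
      have hucnt : u.Countable := countable_coe_iff.1 hcnt'
      -- the per-cube inclusion
      have hperj : ∀ j ∈ u, ∃ Pj : Set (Fin n → ℝ), IsCube Pj ∧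
          volume Pj ≤ ENNReal.ofReal ((13:ℝ)^n) * volume (Metric.closedBall (cB j) (cR j)) ∧
          Bad f P (k+1) ∩ Metric.closedBall (cB j) (5 * cR j) ⊆ Bad f Pj k := by
        intro j hju
        have hjB := huBad hju
        have hrj : 0 < cR j := hcR j hjB
        have hjP : (j : Fin n → ℝ) ∈ P := hjB.1
        have hj13 : (j : Fin n → ℝ) ∈ Metric.closedBall (cB j) (13 * cR j) :=
          closedBall_subset_closedBall (by linarith) (hcmem j hjB)
        obtain ⟨Pj, hPjc, hPjP, hPjcap, hPjvol, havgPj⟩ :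
            ∃ Pj, IsCube Pj ∧ Pj ⊆ P ∧
              (Metric.closedBall (cB j) (13 * cR j) ∩ P ⊆ Pj) ∧
              volume Pj ≤ ENNReal.ofReal ((13:ℝ)^n) * volume (Metric.closedBall (cB j) (cR j)) ∧
              (volume Pj)⁻¹ * ∫⁻ z in Pj, hh f P z ≤ lam := by
          rcases le_or_gt (13 * cR j) rP with hcase | hcase
          · obtain ⟨c', hsub1, hsub2⟩ := slide p (cB j) (by linarith : (0:ℝ) < 13 * cR j) hcase
            have hvolPj : volume (Metric.closedBall c' (13 * cR j))
                = ENNReal.ofReal ((13:ℝ)^n) * volume (Metric.closedBall (cB j) (cR j)) := by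
              rw [volume_cb_scale (cB j) c' hrj.le (by norm_num : (0:ℝ) ≤ 13)]
            refine ⟨Metric.closedBall c' (13 * cR j), isCube_closedBall _ (by linarith),
              hsub1, hsub2, le_of_eq hvolPj, ?_⟩
            by_contra hcon
            push_neg at hcon
            have hjPj : (j : Fin n → ℝ) ∈ Metric.closedBall c' (13 * cR j) :=
              hsub2 ⟨hj13, hjP⟩
            have h2 := hcmax j hjB _ (isCube_closedBall _ (by linarith : (0:ℝ) < 13 * cR j))
              hjPj hcon
            have h3 : 2 * volume (Metric.closedBall (cB j) (cR j))
                ≤ volume (Metric.closedBall c' (13 * cR j)) := by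
              rw [hvolPj]
              refine mul_le_mul_left ?_ _
              calc (2:ℝ≥0∞) = ENNReal.ofReal 2 := by simp
                _ ≤ ENNReal.ofReal ((13:ℝ)^n) := by
                    refine ENNReal.ofReal_le_ofReal ?_
                    calc (2:ℝ) ≤ 13^1 := by norm_num
                      _ ≤ 13^n := pow_le_pow_right₀ (by norm_num) hn
            exact absurd h2 (not_lt.2 h3)
          · refine ⟨P, hP, subset_rfl, inter_subset_right, ?_, ?_⟩
            · rw [← volume_cb_scale (cB j) (cB j) hrj.le (by norm_num : (0:ℝ) ≤ 13), hPdef,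
                volume_cb _ (by positivity : (0:ℝ) ≤ rP),
                volume_cb _ (by positivity : (0:ℝ) ≤ 13 * cR j)]
              exact ENNReal.ofReal_le_ofReal (pow_le_pow_left₀ (by positivity) (by linarith) n)
            · rw [setLintegral_hh_of_subset hPm subset_rfl, ← hI_def, hlam_def]
              nth_rewrite 1 [← one_mul ((volume P)⁻¹ * I)]
              exact mul_le_mul_left one_le_AA _
        have hPjm : MeasurableSet Pj := cube_measurableSet hPjc
        have hdelta : ENNReal.ofReal |avg f Pj - avg f P| ≤ lam := by
          refine (ofReal_abs_avg_sub_le hf hP hPjc hPjP).trans ?_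
          rw [← setLintegral_hh_of_subset hPjm hPjP]
          exact havgPj
        refine ⟨Pj, hPjc, hPjvol, ?_⟩
        rintro y ⟨⟨hyP, hylt⟩, hy5⟩
        rw [hcast] at hylt
        have hy13 : y ∈ Metric.closedBall (cB j) (13 * cR j) :=
          closedBall_subset_closedBall (by linarith) hy5
        have hyPj : y ∈ Pj := hPjcap ⟨hy13, hyP⟩
        obtain ⟨S, hSc, hyS, hSavg⟩ := lt_MP_iff.1 hylt
        obtain ⟨cS, rS, hrS, rfl⟩ := isCube_iff.1 hSc
        have hvS0 : volume (Metric.closedBall cS rS) ≠ 0 := (volume_cb_pos _ hrS).ne'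
        have hvSt : volume (Metric.closedBall cS rS) ≠ ⊤ := (volume_cb_lt_top _ _).ne
        -- the witness cube is small
        have hvolS : volume (Metric.closedBall cS rS)
            ≤ ENNReal.ofReal ((4:ℝ)^n) * volume (Metric.closedBall (cB j) (cR j)) := by
          by_contra hbig
          push_neg at hbig
          have h4one : (1:ℝ≥0∞) ≤ ENNReal.ofReal ((4:ℝ)^n) := by
            calc (1:ℝ≥0∞) = ENNReal.ofReal 1 := by simp
              _ ≤ _ := ENNReal.ofReal_le_ofReal (one_le_pow₀ (by norm_num))
          have hrjS : cR j ≤ rS := by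
            refine radius_le_of_volume_le hn hrj hrS (cB j) cS ?_
            calc volume (Metric.closedBall (cB j) (cR j))
                = 1 * volume (Metric.closedBall (cB j) (cR j)) := (one_mul _).symm
              _ ≤ ENNReal.ofReal ((4:ℝ)^n) * volume (Metric.closedBall (cB j) (cR j)) :=
                  mul_le_mul_left h4one _
              _ ≤ volume (Metric.closedBall cS rS) := hbig.le
          have hTc : IsCube (Metric.closedBall cS (2*rS + 6*cR j)) :=
            isCube_closedBall _ (by linarith)
          have hjT : (j : Fin n → ℝ) ∈ Metric.closedBall cS (2*rS + 6*cR j) := by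
            rw [mem_closedBall]
            have h1 : dist (j : Fin n → ℝ) (cB j) ≤ cR j := hcmem j hjB
            have h2 : dist (cB j) y ≤ 5 * cR j := by rw [dist_comm]; exact hy5
            have h3 : dist y cS ≤ rS := hyS
            calc dist (j : Fin n → ℝ) cS ≤ dist (j : Fin n → ℝ) (cB j) + dist (cB j) y
                  + dist y cS := dist_triangle4 _ _ _ _
              _ ≤ 2*rS + 6*cR j := by linarith
          have hST : Metric.closedBall cS rS ⊆ Metric.closedBall cS (2*rS + 6*cR j) :=
            closedBall_subset_closedBall (by linarith)
          have hvolT : volume (Metric.closedBall cS (2*rS + 6*cR j))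
              ≤ ENNReal.ofReal ((8:ℝ)^n) * volume (Metric.closedBall cS rS) := by
            rw [← volume_cb_scale cS cS hrS.le (by norm_num : (0:ℝ) ≤ 8)]
            refine measure_mono (closedBall_subset_closedBall (by linarith))
          have hvT0 : volume (Metric.closedBall cS (2*rS + 6*cR j)) ≠ 0 :=
            (volume_cb_pos _ (by linarith)).ne'
          have hvTt : volume (Metric.closedBall cS (2*rS + 6*cR j)) ≠ ⊤ :=
            (volume_cb_lt_top _ _).ne
          -- the average over T is still large
          have hJgt : (CC n * ((k:ℝ≥0∞)+1+1) * sharp f y) * volume (Metric.closedBall cS rS)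
              < ∫⁻ z in Metric.closedBall cS rS, hh f P z := by
            calc (CC n * ((k:ℝ≥0∞)+1+1) * sharp f y) * volume (Metric.closedBall cS rS)
                < ((volume (Metric.closedBall cS rS))⁻¹
                    * ∫⁻ z in Metric.closedBall cS rS, hh f P z)
                    * volume (Metric.closedBall cS rS) := by
                  exact ENNReal.mul_lt_mul_left hvS0 hvSt hSavg
              _ = ∫⁻ z in Metric.closedBall cS rS, hh f P z := by
                  rw [mul_comm ((volume (Metric.closedBall cS rS))⁻¹) _, mul_assoc,
                    ENNReal.inv_mul_cancel hvS0 hvSt, mul_one]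
          have hTavg : lam < (volume (Metric.closedBall cS (2*rS + 6*cR j)))⁻¹
              * ∫⁻ z in Metric.closedBall cS (2*rS + 6*cR j), hh f P z := by
            have h8n0 : ENNReal.ofReal ((8:ℝ)^n) ≠ 0 := by
              simp only [ne_eq, ENNReal.ofReal_eq_zero, not_le]; positivity
            have hkey : lam ≤ (ENNReal.ofReal ((8:ℝ)^n))⁻¹
                * (CC n * ((k:ℝ≥0∞)+1+1) * sharp f y) := by
              have hCCAA : AA n = (ENNReal.ofReal ((8:ℝ)^n))⁻¹ * CC n := by
                rw [CC]
                have h8 : ENNReal.ofReal ((8:ℝ)^n) = (8:ℝ≥0∞)^n := by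
                  rw [ENNReal.ofReal_pow (by norm_num)]
                  norm_num
                rw [h8, ← mul_assoc, ENNReal.inv_mul_cancel (by positivity)
                  (ENNReal.pow_ne_top (by norm_num)), one_mul]
              calc lam = AA n * ((volume P)⁻¹ * I) := hlam_def
                _ ≤ AA n * sharp f y := mul_le_mul_right (hsharp_ge y hyP) _
                _ = (ENNReal.ofReal ((8:ℝ)^n))⁻¹ * CC n * sharp f y := by rw [hCCAA]
                _ ≤ (ENNReal.ofReal ((8:ℝ)^n))⁻¹ * (CC n * ((k:ℝ≥0∞)+1+1)) * sharp f y := by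
                    rw [mul_assoc, mul_assoc]
                    refine mul_le_mul_right (mul_le_mul_left ?_ _) _
                    nth_rewrite 1 [← mul_one (CC n)]
                    exact mul_le_mul_right (by simp) _
                _ = (ENNReal.ofReal ((8:ℝ)^n))⁻¹ * (CC n * ((k:ℝ≥0∞)+1+1) * sharp f y) := by
                    rw [mul_assoc, mul_assoc]
            refine lt_of_le_of_lt ?_ (?_ :
              (ENNReal.ofReal ((8:ℝ)^n) * volume (Metric.closedBall cS rS))⁻¹
                * ((CC n * ((k:ℝ≥0∞)+1+1) * sharp f y) * volume (Metric.closedBall cS rS))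
              < _)
            · rw [ENNReal.mul_inv (Or.inl h8n0) (Or.inl (ENNReal.ofReal_ne_top))]
              calc lam ≤ (ENNReal.ofReal ((8:ℝ)^n))⁻¹
                    * (CC n * ((k:ℝ≥0∞)+1+1) * sharp f y) := hkey
                _ = (ENNReal.ofReal ((8:ℝ)^n))⁻¹
                    * ((CC n * ((k:ℝ≥0∞)+1+1) * sharp f y)
                      * ((volume (Metric.closedBall cS rS))⁻¹
                        * volume (Metric.closedBall cS rS))) := by
                    rw [ENNReal.inv_mul_cancel hvS0 hvSt, mul_one]
                _ = (ENNReal.ofReal ((8:ℝ)^n))⁻¹ * (volume (Metric.closedBall cS rS))⁻¹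
                    * ((CC n * ((k:ℝ≥0∞)+1+1) * sharp f y)
                      * volume (Metric.closedBall cS rS)) := by ring
            · calc (ENNReal.ofReal ((8:ℝ)^n) * volume (Metric.closedBall cS rS))⁻¹
                  * ((CC n * ((k:ℝ≥0∞)+1+1) * sharp f y) * volume (Metric.closedBall cS rS))
                  < (ENNReal.ofReal ((8:ℝ)^n) * volume (Metric.closedBall cS rS))⁻¹
                    * ∫⁻ z in Metric.closedBall cS rS, hh f P z := by
                    refine ENNReal.mul_lt_mul_right ?_ ?_ hJgt
                    · simp only [ne_eq, ENNReal.inv_eq_zero]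
                      exact ENNReal.mul_ne_top ENNReal.ofReal_ne_top hvSt
                    · simp only [ne_eq, ENNReal.inv_eq_top]
                      exact mul_ne_zero h8n0 hvS0
                _ ≤ (volume (Metric.closedBall cS (2*rS + 6*cR j)))⁻¹
                    * ∫⁻ z in Metric.closedBall cS (2*rS + 6*cR j), hh f P z := by
                    refine mul_le_mul ?_ (lintegral_mono_set hST) zero_le zero_le
                    exact ENNReal.inv_le_inv' hvolT
          have h2 := hcmax j hjB _ hTc hjT hTavg
          have h3 : volume (Metric.closedBall cS rS)
              ≤ volume (Metric.closedBall cS (2*rS + 6*cR j)) := measure_mono hST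
          have h4 : (2:ℝ≥0∞) ≤ ENNReal.ofReal ((4:ℝ)^n) := by
            calc (2:ℝ≥0∞) = ENNReal.ofReal 2 := by simp
              _ ≤ _ := by
                  refine ENNReal.ofReal_le_ofReal ?_
                  calc (2:ℝ) ≤ 4^1 := by norm_num
                    _ ≤ 4^n := pow_le_pow_right₀ (by norm_num) hn
          have h5 : 2 * volume (Metric.closedBall (cB j) (cR j))
              ≤ ENNReal.ofReal ((4:ℝ)^n) * volume (Metric.closedBall (cB j) (cR j)) :=
            mul_le_mul_left h4 _
          exact lt_irrefl _ (((h5.trans_lt hbig).trans_le h3).trans h2)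
        have hrS4 : rS ≤ 4 * cR j := by
          refine radius_le_of_volume_le hn hrS (by linarith) cS (cB j) ?_
          rw [volume_cb_scale (cB j) (cB j) hrj.le (by norm_num : (0:ℝ) ≤ 4)]
          exact hvolS
        have hS13 : Metric.closedBall cS rS ⊆ Metric.closedBall (cB j) (13 * cR j) := by
          intro z hz
          rw [mem_closedBall] at hz ⊢
          have h1 : dist cS y ≤ rS := by rw [dist_comm]; exact hyS
          have h2 : dist y (cB j) ≤ 5 * cR j := hy5
          calc dist z (cB j) ≤ dist z cS + dist cS y + dist y (cB j) := dist_triangle4 _ _ _ _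
            _ ≤ 13 * cR j := by linarith
        -- pointwise comparison on S
        have hpt : ∀ z ∈ Metric.closedBall cS rS,
            hh f P z ≤ hh f Pj z + ENNReal.ofReal |avg f Pj - avg f P| := by
          intro z hz
          by_cases hzP : z ∈ P
          · have hzPj : z ∈ Pj := hPjcap ⟨hS13 hz, hzP⟩
            unfold hh
            rw [indicator_of_mem hzP, indicator_of_mem hzPj]
            calc ENNReal.ofReal |f z - avg f P|
                ≤ ENNReal.ofReal (|f z - avg f Pj| + |avg f Pj - avg f P|) :=
                  ENNReal.ofReal_le_ofReal (abs_sub_le _ _ _)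
              _ ≤ _ := ENNReal.ofReal_add_le
          · unfold hh
            rw [indicator_of_notMem hzP]
            exact zero_le
        have hintS : ∫⁻ z in Metric.closedBall cS rS, hh f P z
            ≤ (∫⁻ z in Metric.closedBall cS rS, hh f Pj z)
              + ENNReal.ofReal |avg f Pj - avg f P| * volume (Metric.closedBall cS rS) := by
          calc ∫⁻ z in Metric.closedBall cS rS, hh f P z
              ≤ ∫⁻ z in Metric.closedBall cS rS,
                  (hh f Pj z + ENNReal.ofReal |avg f Pj - avg f P|) :=
                setLIntegral_mono' measurableSet_closedBall hpt
            _ = _ := by rw [lintegral_add_right _ measurable_const, setLIntegral_const]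
        -- conclude y ∈ Bad f Pj k
        refine ⟨hyPj, ?_⟩
        have hmain : CC n * ((k:ℝ≥0∞)+1) * sharp f y
            < (volume (Metric.closedBall cS rS))⁻¹
              * ∫⁻ z in Metric.closedBall cS rS, hh f Pj z := by
          by_contra hcon
          push_neg at hcon
          have hsylam : lam ≤ AA n * sharp f y := by
            rw [hlam_def]
            exact mul_le_mul_right (hsharp_ge y hyP) _
          have h1 : (volume (Metric.closedBall cS rS))⁻¹
              * ∫⁻ z in Metric.closedBall cS rS, hh f P z
              ≤ CC n * ((k:ℝ≥0∞)+1) * sharp f y + lam := by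
            calc (volume (Metric.closedBall cS rS))⁻¹
                * ∫⁻ z in Metric.closedBall cS rS, hh f P z
                ≤ (volume (Metric.closedBall cS rS))⁻¹
                  * ((∫⁻ z in Metric.closedBall cS rS, hh f Pj z)
                    + ENNReal.ofReal |avg f Pj - avg f P|
                      * volume (Metric.closedBall cS rS)) := mul_le_mul_right hintS _
              _ = ((volume (Metric.closedBall cS rS))⁻¹
                  * ∫⁻ z in Metric.closedBall cS rS, hh f Pj z)
                  + ENNReal.ofReal |avg f Pj - avg f P|
                    * ((volume (Metric.closedBall cS rS))⁻¹
                      * volume (Metric.closedBall cS rS)) := by ring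
              _ = ((volume (Metric.closedBall cS rS))⁻¹
                  * ∫⁻ z in Metric.closedBall cS rS, hh f Pj z)
                  + ENNReal.ofReal |avg f Pj - avg f P| := by
                  rw [ENNReal.inv_mul_cancel hvS0 hvSt, mul_one]
              _ ≤ CC n * ((k:ℝ≥0∞)+1) * sharp f y + lam := add_le_add hcon hdelta
          have h2 : CC n * ((k:ℝ≥0∞)+1) * sharp f y + lam
              ≤ CC n * ((k:ℝ≥0∞)+1+1) * sharp f y := by
            calc CC n * ((k:ℝ≥0∞)+1) * sharp f y + lam
                ≤ CC n * ((k:ℝ≥0∞)+1) * sharp f y + AA n * sharp f y := add_le_add_right hsylam _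
              _ = (CC n * ((k:ℝ≥0∞)+1) + AA n) * sharp f y := (add_mul _ _ _).symm
              _ ≤ (CC n * ((k:ℝ≥0∞)+1) + CC n) * sharp f y :=
                  mul_le_mul_left (add_le_add_right AA_le_CC _) _
              _ = CC n * ((k:ℝ≥0∞)+1+1) * sharp f y := by
                  ring
          exact lt_irrefl _ (hSavg.trans_le (h1.trans h2))
        exact lt_of_lt_of_le hmain (le_MP (isCube_closedBall cS hrS) hyS)
      choose! Pj hPjc hPjvol hPjsub using hperj
      -- covering
      have hBadcov : Bad f P (k+1)
          ⊆ ⋃ j ∈ u, (Bad f P (k+1) ∩ Metric.closedBall (cB j) (5 * cR j)) := by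
        intro x hx
        obtain ⟨j, hju, hint, hr2⟩ := hcov x hx
        obtain ⟨w, hw1, hw2⟩ := hint
        refine mem_biUnion hju ⟨hx, ?_⟩
        rw [mem_closedBall]
        have h1 : dist x (cB x) ≤ cR x := hcmem x hx
        have h2 : dist (cB x) w ≤ cR x := by rw [dist_comm]; exact hw1
        have h3 : dist w (cB j) ≤ cR j := hw2
        have h5 : 0 ≤ cR j := (hcR _ (huBad hju)).le
        calc dist x (cB j) ≤ dist x (cB x) + dist (cB x) w + dist w (cB j) :=
              dist_triangle4 _ _ _ _
          _ ≤ 5 * cR j := by linarith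
      have hsum : ∑' j : ↥u, volume (Metric.closedBall (cB ↑j) (cR ↑j)) ≤ lam⁻¹ * I := by
        have h1 : ∀ j : ↥u, volume (Metric.closedBall (cB ↑j) (cR ↑j))
            ≤ lam⁻¹ * ∫⁻ z in Metric.closedBall (cB ↑j) (cR ↑j), hh f P z := by
          intro j
          have havg := hcavg ↑j (huBad j.2)
          have hv0 : volume (Metric.closedBall (cB ↑j) (cR ↑j)) ≠ 0 :=
            (volume_cb_pos _ (hcR _ (huBad j.2))).ne'
          have hvt : volume (Metric.closedBall (cB ↑j) (cR ↑j)) ≠ ⊤ :=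
            (volume_cb_lt_top _ _).ne
          calc volume (Metric.closedBall (cB ↑j) (cR ↑j))
              = lam⁻¹ * (lam * volume (Metric.closedBall (cB ↑j) (cR ↑j))) := by
                rw [← mul_assoc, ENNReal.inv_mul_cancel hlam0 hlamt, one_mul]
            _ ≤ lam⁻¹ * ∫⁻ z in Metric.closedBall (cB ↑j) (cR ↑j), hh f P z := by
                refine mul_le_mul_right ?_ _
                calc lam * volume (Metric.closedBall (cB ↑j) (cR ↑j))
                    ≤ ((volume (Metric.closedBall (cB ↑j) (cR ↑j)))⁻¹
                      * ∫⁻ z in Metric.closedBall (cB ↑j) (cR ↑j), hh f P z)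
                      * volume (Metric.closedBall (cB ↑j) (cR ↑j)) :=
                      mul_le_mul_left havg.le _
                  _ = ∫⁻ z in Metric.closedBall (cB ↑j) (cR ↑j), hh f P z := by
                      rw [mul_comm ((volume (Metric.closedBall (cB ↑j) (cR ↑j)))⁻¹) _,
                        mul_assoc, ENNReal.inv_mul_cancel hv0 hvt, mul_one]
        calc ∑' j : ↥u, volume (Metric.closedBall (cB ↑j) (cR ↑j))
            ≤ ∑' j : ↥u, lam⁻¹ * ∫⁻ z in Metric.closedBall (cB ↑j) (cR ↑j), hh f P z :=
              ENNReal.tsum_le_tsum h1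
          _ = lam⁻¹ * ∑' j : ↥u, ∫⁻ z in Metric.closedBall (cB ↑j) (cR ↑j), hh f P z :=
              ENNReal.tsum_mul_left
          _ = lam⁻¹ * ∫⁻ z in ⋃ j : ↥u, Metric.closedBall (cB ↑j) (cR ↑j), hh f P z := by
              rw [lintegral_iUnion (fun j => measurableSet_closedBall) hdisj']
          _ ≤ lam⁻¹ * I := mul_le_mul_right (hSle _) _
      -- final computation
      have harith : ENNReal.ofReal ((13:ℝ)^n) * ((AA n)⁻¹ * volume P) = 2⁻¹ * volume P := by
        rw [← mul_assoc]
        congr 1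
        have h13 : ENNReal.ofReal ((13:ℝ)^n) = (13:ℝ≥0∞)^n := by
          rw [ENNReal.ofReal_pow (by norm_num)]; norm_num
        rw [h13, AA, ENNReal.mul_inv (Or.inl (by norm_num)) (Or.inl (by norm_num)),
          ← mul_assoc, mul_comm ((13:ℝ≥0∞)^n) _, mul_assoc,
          ENNReal.mul_inv_cancel (by positivity) (ENNReal.pow_ne_top (by norm_num)), mul_one]
      calc volume (Bad f P (k+1))
          ≤ ∑' j : ↥u, volume (Bad f P (k+1) ∩ Metric.closedBall (cB ↑j) (5 * cR ↑j)) :=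
            (measure_mono hBadcov).trans (measure_biUnion_le volume hucnt _)
        _ ≤ ∑' j : ↥u, (2:ℝ≥0∞)⁻¹^k
              * (ENNReal.ofReal ((13:ℝ)^n) * volume (Metric.closedBall (cB ↑j) (cR ↑j))) := by
            refine ENNReal.tsum_le_tsum fun j => ?_
            refine (measure_mono (hPjsub ↑j j.2)).trans ((IH _ (hPjc ↑j j.2)).trans ?_)
            exact mul_le_mul_right (hPjvol ↑j j.2) _
        _ = (2:ℝ≥0∞)⁻¹^k * ENNReal.ofReal ((13:ℝ)^n)
              * ∑' j : ↥u, volume (Metric.closedBall (cB ↑j) (cR ↑j)) := by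
            rw [← ENNReal.tsum_mul_left]
            congr 1
            funext j
            ring
        _ ≤ (2:ℝ≥0∞)⁻¹^k * ENNReal.ofReal ((13:ℝ)^n) * (lam⁻¹ * I) :=
            mul_le_mul_right hsum _
        _ = (2:ℝ≥0∞)⁻¹^(k+1) * volume P := by
            rw [hlamI, mul_assoc, harith, pow_succ, mul_assoc]
      
end Stmt9
namespace Stmt9

open Metric Set MeasureTheory ENNReal Filter

variable {n : ℕ}

theorem ser_real {p : ℝ} (hp : 1 ≤ p) (k : ℕ) :
    ((k:ℝ)+1)^p * ((2:ℝ)⁻¹)^k ≤ 2*(2*p)^p * ((Real.sqrt 2)⁻¹)^k := by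
  have hp0 : (0:ℝ) < p := lt_of_lt_of_le one_pos hp
  have hlog2 := Real.log_two_gt_d9
  have hln2 : (0:ℝ) < Real.log 2 := by linarith
  have hs2 : (0:ℝ) < Real.sqrt 2 := Real.sqrt_pos.2 (by norm_num)
  have hmain : Real.log ((k:ℝ)+1) * p
      ≤ Real.log 2 + Real.log (2*p) * p + k * Real.log (Real.sqrt 2) := by
    have hle : Real.log ((k:ℝ)+1) ≤ Real.log ((k:ℝ)+2) :=
      Real.log_le_log (by positivity) (by linarith)
    have hkey := Real.log_le_sub_one_of_pos
      (x := (((k:ℝ)+2) * Real.log 2) / (2*p)) (by positivity)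
    have hsplit : Real.log ((((k:ℝ)+2) * Real.log 2) / (2*p))
        = Real.log ((k:ℝ)+2) + Real.log (Real.log 2) - Real.log (2*p) := by
      rw [Real.log_div (by positivity) (by positivity),
        Real.log_mul (by positivity) (ne_of_gt hln2)]
    have hloglog : -1 ≤ Real.log (Real.log 2) := by
      have he : (2:ℝ) ≤ Real.exp 1 := by
        have := Real.exp_one_gt_d9; linarith
      have h1 : Real.exp (-1) ≤ Real.log 2 := by
        rw [Real.exp_neg]
        have h2 : (Real.exp 1)⁻¹ ≤ 2⁻¹ := by
          exact inv_anti₀ (by norm_num) he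
        rw [show ((2:ℝ))⁻¹ = 0.5 by norm_num] at h2
        linarith
      calc (-1:ℝ) = Real.log (Real.exp (-1)) := (Real.log_exp _).symm
        _ ≤ Real.log (Real.log 2) := Real.log_le_log (Real.exp_pos _) h1
    have hsqrt : Real.log (Real.sqrt 2) = Real.log 2 / 2 := Real.log_sqrt (by norm_num)
    have hfield : p * ((((k:ℝ)+2) * Real.log 2) / (2*p)) = ((k:ℝ)+2) * Real.log 2 / 2 := by
      field_simp
    rw [hsplit] at hkey
    have h5 := mul_le_mul_of_nonneg_left hkey hp0.le
    have h6 := mul_le_mul_of_nonneg_left hle hp0.le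
    have h7 := mul_le_mul_of_nonneg_left hloglog hp0.le
    rw [hsqrt]
    nlinarith [h5, h6, h7, hfield]
  have hL : ((k:ℝ)+1)^p = Real.exp (Real.log ((k:ℝ)+1) * p) :=
    Real.rpow_def_of_pos (by positivity) p
  have hR1 : (2*p)^p = Real.exp (Real.log (2*p) * p) := Real.rpow_def_of_pos (by positivity) p
  have hR2 : (Real.sqrt 2 : ℝ)^k = Real.exp ((k:ℝ) * Real.log (Real.sqrt 2)) := by
    rw [← Real.log_pow, Real.exp_log (by positivity)]
  have h2e : (2:ℝ) = Real.exp (Real.log 2) := (Real.exp_log (by norm_num)).symm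
  have hcomp : ((k:ℝ)+1)^p ≤ 2*(2*p)^p * (Real.sqrt 2)^k := by
    rw [hL, hR1, hR2]
    nth_rewrite 1 [h2e]
    rw [← Real.exp_add, ← Real.exp_add]
    exact Real.exp_le_exp.2 hmain
  have hid : ((Real.sqrt 2)⁻¹:ℝ)^k = (Real.sqrt 2)^k * ((2:ℝ)⁻¹)^k := by
    rw [← mul_pow]
    congr 1
    refine inv_eq_of_mul_eq_one_right ?_
    have hss : Real.sqrt 2 * Real.sqrt 2 = 2 := Real.mul_self_sqrt (by norm_num)
    rw [← mul_assoc, hss]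
    norm_num
  calc ((k:ℝ)+1)^p * ((2:ℝ)⁻¹)^k ≤ (2*(2*p)^p * (Real.sqrt 2)^k) * ((2:ℝ)⁻¹)^k :=
        mul_le_mul_of_nonneg_right hcomp (by positivity)
    _ = 2*(2*p)^p * ((Real.sqrt 2)⁻¹:ℝ)^k := by rw [hid]; ring

theorem ser_ennreal {p : ℝ} (hp : 1 ≤ p) :
    (∑' k : ℕ, (CC n * ((k:ℝ≥0∞)+1))^p * (2:ℝ≥0∞)⁻¹^k)
      ≤ CC n^p * ENNReal.ofReal (2*(2*p)^p) * 4 := by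
  have hp0 : (0:ℝ) ≤ p := by linarith
  have hterm : ∀ k : ℕ, (CC n * ((k:ℝ≥0∞)+1))^p * (2:ℝ≥0∞)⁻¹^k
      ≤ CC n^p * (ENNReal.ofReal (2*(2*p)^p) * ENNReal.ofReal ((Real.sqrt 2)⁻¹)^k) := by
    intro k
    have hmul : (CC n * ((k:ℝ≥0∞)+1))^p = CC n^p * ((k:ℝ≥0∞)+1)^p :=
      ENNReal.mul_rpow_of_ne_top CC_ne_top (by simp : ((k:ℝ≥0∞)+1) ≠ ⊤) p
    rw [hmul, mul_assoc]
    refine mul_le_mul_right ?_ _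
    have hL : ((k:ℝ≥0∞)+1)^p * (2:ℝ≥0∞)⁻¹^k
        = ENNReal.ofReal (((k:ℝ)+1)^p * ((2:ℝ)⁻¹)^k) := by
      rw [ENNReal.ofReal_mul (by positivity)]
      congr 1
      · rw [show ((k:ℝ) + 1) = ((k+1 : ℕ) : ℝ) by push_cast; ring,
          ← ENNReal.ofReal_rpow_of_nonneg (by positivity) hp0, ENNReal.ofReal_natCast]
        push_cast
        ring_nf
      · rw [ENNReal.ofReal_pow (by positivity : (0:ℝ) ≤ 2⁻¹),
          ENNReal.ofReal_inv_of_pos (by norm_num : (0:ℝ) < 2)]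
        norm_num
    rw [hL]
    calc ENNReal.ofReal (((k:ℝ)+1)^p * ((2:ℝ)⁻¹)^k)
        ≤ ENNReal.ofReal (2*(2*p)^p * ((Real.sqrt 2)⁻¹)^k) :=
          ENNReal.ofReal_le_ofReal (ser_real hp k)
      _ = ENNReal.ofReal (2*(2*p)^p) * ENNReal.ofReal ((Real.sqrt 2)⁻¹)^k := by
          rw [ENNReal.ofReal_mul (by positivity), ENNReal.ofReal_pow (by positivity)]
  calc (∑' k : ℕ, (CC n * ((k:ℝ≥0∞)+1))^p * (2:ℝ≥0∞)⁻¹^k)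
      ≤ ∑' k : ℕ, CC n^p * (ENNReal.ofReal (2*(2*p)^p)
          * ENNReal.ofReal ((Real.sqrt 2)⁻¹)^k) := ENNReal.tsum_le_tsum hterm
    _ = CC n^p * (ENNReal.ofReal (2*(2*p)^p)
          * ∑' k : ℕ, ENNReal.ofReal ((Real.sqrt 2)⁻¹)^k) := by
        rw [ENNReal.tsum_mul_left, ENNReal.tsum_mul_left]
    _ ≤ CC n^p * (ENNReal.ofReal (2*(2*p)^p) * 4) := by
        refine mul_le_mul_right (mul_le_mul_right ?_ _) _
        rw [ENNReal.tsum_geometric]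
        have h2 : (4/3:ℝ) ≤ Real.sqrt 2 := by
          nlinarith [Real.sq_sqrt (show (0:ℝ) ≤ 2 by norm_num), Real.sqrt_nonneg 2]
        have h1 : ENNReal.ofReal ((Real.sqrt 2)⁻¹) ≤ ENNReal.ofReal (3/4) := by
          refine ENNReal.ofReal_le_ofReal ?_
          have := inv_anti₀ (by norm_num : (0:ℝ) < 4/3) h2
          rw [show ((4/3:ℝ))⁻¹ = 3/4 by norm_num] at this
          exact this
        have h3 : ENNReal.ofReal (3/4 : ℝ) = 3 * 4⁻¹ := by
          rw [show (3/4:ℝ) = 3*4⁻¹ by norm_num, ENNReal.ofReal_mul (by norm_num),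
            ENNReal.ofReal_inv_of_pos (by norm_num)]
          norm_num
        have h4 : (1:ℝ≥0∞) - 3*4⁻¹ = 4⁻¹ := by
          refine ENNReal.sub_eq_of_eq_add ?_ ?_
          · refine ENNReal.mul_ne_top (by norm_num) (by norm_num)
          · rw [show (4:ℝ≥0∞)⁻¹ + 3*4⁻¹ = 4*4⁻¹ by ring,
              ENNReal.mul_inv_cancel (by norm_num) (by norm_num)]
        have h5 : (4:ℝ≥0∞)⁻¹ ≤ 1 - ENNReal.ofReal ((Real.sqrt 2)⁻¹) := by
          rw [← h4]
          exact tsub_le_tsub_left (h1.trans_eq h3) 1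
        calc (1 - ENNReal.ofReal ((Real.sqrt 2)⁻¹))⁻¹ ≤ ((4:ℝ≥0∞)⁻¹)⁻¹ :=
              ENNReal.inv_le_inv' h5
          _ = 4 := inv_inv 4
    _ = CC n^p * ENNReal.ofReal (2*(2*p)^p) * 4 := by rw [mul_assoc]

end Stmt9

namespace Stmt9

open Metric Set MeasureTheory ENNReal Filter

theorem final {n : ℕ} :
    ∀ f : (Fin n → ℝ) → ℝ, LocallyIntegrable f volume →
      (¬ ∃ a : ℝ, f =ᵐ[volume] fun _ => a) →
      ∀ Q : Set (Fin n → ℝ), IsCube Q →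
        ∀ p : ℝ, 1 ≤ p →
          ((volume Q)⁻¹ *
              ∫⁻ x in Q,
                (mxF (Q.indicator fun y => f y - avg f Q) x / sharp f x) ^ p) ^ (1 / p)
            ≤ ENNReal.ofReal ((64 * 104 ^ n : ℝ) * p) := by
  intro f hf hnc Q hQ p hp
  classical
  rcases Nat.eq_zero_or_pos n with hn | hn
  · exfalso
    subst hn
    exact hnc ⟨f (fun i => i.elim0),
      Filter.Eventually.of_forall fun x => congrArg f (funext fun i => i.elim0)⟩
  have hp0 : (0:ℝ) < p := lt_of_lt_of_le one_pos hp
  have hQm : MeasurableSet Q := cube_measurableSet hQ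
  have hvolQ0 : volume Q ≠ 0 := (cube_vol_pos hQ).ne'
  have hvolQt : volume Q ≠ ⊤ := (cube_vol_lt_top hQ).ne
  set r : (Fin n → ℝ) → ℝ≥0∞ := fun x => MP f Q x / sharp f x with hr
  set D : ℕ → Set (Fin n → ℝ) := fun k => toMeasurable volume (Bad f Q k) with hD
  have hDm : ∀ k, MeasurableSet (D k) := fun k => measurableSet_toMeasurable _ _
  have hDvol : ∀ k, volume (D k) ≤ (2:ℝ≥0∞)⁻¹^k * volume Q := fun k => by
    rw [hD, measure_toMeasurable]
    exact bad_bound hn hf k Q hQ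
  have hratio : ∀ (k : ℕ) (y : Fin n → ℝ), y ∈ Q → y ∉ D k →
      r y ≤ CC n * ((k:ℝ≥0∞)+1) := by
    intro k y hyQ hyD
    by_contra hcon
    push_neg at hcon
    refine hyD (subset_toMeasurable _ _ ?_)
    refine ⟨hyQ, ?_⟩
    rcases eq_or_ne (sharp f y) ⊤ with hs | hs
    · exfalso
      rw [hr] at hcon
      simp only [hs, ENNReal.div_top] at hcon
      exact (ENNReal.not_lt_zero hcon)
    · exact (ENNReal.lt_div_iff_mul_lt
        (Or.inr (ENNReal.mul_ne_top CC_ne_top (by simp))) (Or.inl hs)).1 hcon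
  -- the partition
  set G : ℕ → Set (Fin n → ℝ) :=
    fun k => if k = 0 then Q \ D 0 else (Q ∩ D (k-1)) \ D k with hG
  have hGm : ∀ k, MeasurableSet (G k) := by
    intro k
    rw [hG]
    rcases Nat.eq_zero_or_pos k with h | h
    · simp only [h, if_pos rfl]
      exact hQm.diff (hDm 0)
    · simp only [if_neg (Nat.pos_iff_ne_zero.1 h)]
      exact (hQm.inter (hDm _)).diff (hDm k)
  have hGr : ∀ k, ∀ y ∈ G k, r y ≤ CC n * ((k:ℝ≥0∞)+1) := by
    intro k y hy
    rw [hG] at hy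
    rcases Nat.eq_zero_or_pos k with h | h
    · subst h
      simp only [if_pos rfl, mem_diff] at hy
      exact hratio 0 y hy.1 hy.2
    · simp only [if_neg (Nat.pos_iff_ne_zero.1 h), mem_diff, mem_inter_iff] at hy
      exact hratio k y hy.1.1 hy.2
  have hGvol : ∀ k, volume (G k) ≤ (2:ℝ≥0∞)⁻¹^k * (2 * volume Q) := by
    intro k
    rw [hG]
    rcases Nat.eq_zero_or_pos k with h | h
    · subst h
      simp only [if_pos rfl]
      calc volume (Q \ D 0) ≤ volume Q := measure_mono diff_subset
        _ ≤ (2:ℝ≥0∞)⁻¹^0 * (2 * volume Q) := by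
            rw [pow_zero, one_mul]
            nth_rewrite 1 [← one_mul (volume Q)]
            exact mul_le_mul_left (by norm_num) _
    · simp only [if_neg (Nat.pos_iff_ne_zero.1 h)]
      calc volume ((Q ∩ D (k-1)) \ D k) ≤ volume (D (k-1)) :=
            measure_mono (fun y hy => hy.1.2)
        _ ≤ (2:ℝ≥0∞)⁻¹^(k-1) * volume Q := hDvol _
        _ = (2:ℝ≥0∞)⁻¹^k * (2 * volume Q) := by
            have hk : k = (k-1) + 1 := (Nat.succ_pred_eq_of_pos h).symm
            rw [← mul_assoc]
            congr 1
            rw [hk]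
            rw [pow_succ, mul_assoc, ENNReal.inv_mul_cancel (by norm_num) (by norm_num),
              mul_one]
            simp
  set N : Set (Fin n → ℝ) := Q ∩ ⋂ k, D k with hN
  have hNvol : volume N = 0 := by
    have h1 : ∀ k, volume N ≤ (2:ℝ≥0∞)⁻¹^k * volume Q := fun k =>
      (measure_mono ((inter_subset_right).trans (iInter_subset _ k))).trans (hDvol k)
    have h2 : Tendsto (fun k : ℕ => (2:ℝ≥0∞)⁻¹^k * volume Q) atTop (nhds (0 * volume Q)) :=
      ENNReal.Tendsto.mul_const
        (ENNReal.tendsto_pow_atTop_nhds_zero_of_lt_one (by norm_num)) (Or.inr hvolQt)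
    rw [zero_mul] at h2
    exact le_antisymm (ge_of_tendsto' h2 h1) zero_le
  have hcover : Q ⊆ (⋃ k, G k) ∪ N := by
    intro y hy
    by_cases hall : ∀ k, y ∈ D k
    · exact Or.inr ⟨hy, mem_iInter.2 hall⟩
    · push_neg at hall
      left
      have hfind := Nat.find_spec hall
      set k₀ := Nat.find hall with hk₀
      refine mem_iUnion.2 ⟨k₀, ?_⟩
      rw [hG]
      rcases Nat.eq_zero_or_pos k₀ with h | h
      · simp only [h, if_pos rfl]
        rw [h] at hfind
        exact ⟨hy, hfind⟩
      · simp only [if_neg (Nat.pos_iff_ne_zero.1 h)]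
        refine ⟨⟨hy, ?_⟩, hfind⟩
        by_contra hnot
        exact (Nat.find_min hall (Nat.pred_lt (Nat.pos_iff_ne_zero.1 h))) hnot
  -- the integral estimate
  have hrestr : volume.restrict Q
      ≤ Measure.sum (fun k => volume.restrict (G k)) + volume.restrict N := by
    refine le_trans (Measure.restrict_mono hcover le_rfl) ?_
    refine le_trans (Measure.restrict_union_le _ _) ?_
    exact add_le_add_left Measure.restrict_iUnion_le _
  have hint1 : ∫⁻ x in Q, (r x)^p
      ≤ (∑' k : ℕ, ∫⁻ x in G k, (r x)^p) + ∫⁻ x in N, (r x)^p := by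
    calc ∫⁻ x in Q, (r x)^p
        ≤ ∫⁻ x, (r x)^p ∂(Measure.sum (fun k => volume.restrict (G k))
            + volume.restrict N) := lintegral_mono' hrestr le_rfl
      _ = _ := by rw [lintegral_add_measure, lintegral_sum_measure]
  have hint2 : ∀ k : ℕ, ∫⁻ x in G k, (r x)^p
      ≤ (CC n * ((k:ℝ≥0∞)+1))^p * (2:ℝ≥0∞)⁻¹^k * (2 * volume Q) := by
    intro k
    calc ∫⁻ x in G k, (r x)^p ≤ ∫⁻ _x in G k, (CC n * ((k:ℝ≥0∞)+1))^p :=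
          setLIntegral_mono' (hGm k) (fun y hy =>
            ENNReal.rpow_le_rpow (hGr k y hy) (by linarith))
      _ = (CC n * ((k:ℝ≥0∞)+1))^p * volume (G k) := setLIntegral_const _ _
      _ ≤ (CC n * ((k:ℝ≥0∞)+1))^p * ((2:ℝ≥0∞)⁻¹^k * (2 * volume Q)) :=
          mul_le_mul_right (hGvol k) _
      _ = (CC n * ((k:ℝ≥0∞)+1))^p * (2:ℝ≥0∞)⁻¹^k * (2 * volume Q) := by rw [mul_assoc]
  have hint3 : ∫⁻ x in Q, (r x)^p
      ≤ (CC n^p * ENNReal.ofReal (2*(2*p)^p) * 4) * (2 * volume Q) := by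
    refine hint1.trans ?_
    rw [setLIntegral_measure_zero _ _ hNvol, add_zero]
    calc (∑' k : ℕ, ∫⁻ x in G k, (r x)^p)
        ≤ ∑' k : ℕ, (CC n * ((k:ℝ≥0∞)+1))^p * (2:ℝ≥0∞)⁻¹^k * (2 * volume Q) :=
          ENNReal.tsum_le_tsum hint2
      _ = (∑' k : ℕ, (CC n * ((k:ℝ≥0∞)+1))^p * (2:ℝ≥0∞)⁻¹^k) * (2 * volume Q) :=
          ENNReal.tsum_mul_right
      _ ≤ _ := mul_le_mul_left (ser_ennreal hp) _
  -- put everything together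
  have hinteq : ∫⁻ x in Q, (mxF (Q.indicator fun y => f y - avg f Q) x / sharp f x) ^ p
      = ∫⁻ x in Q, (r x)^p := by
    refine lintegral_congr fun x => ?_
    rw [hr]
    simp only []
    rw [mxF_indicator_eq f Q x]
    rfl
  have hfinal1 : (volume Q)⁻¹ *
      ∫⁻ x in Q, (mxF (Q.indicator fun y => f y - avg f Q) x / sharp f x) ^ p
      ≤ CC n^p * ENNReal.ofReal (2*(2*p)^p) * 8 := by
    rw [hinteq]
    calc (volume Q)⁻¹ * ∫⁻ x in Q, (r x)^p
        ≤ (volume Q)⁻¹ * ((CC n^p * ENNReal.ofReal (2*(2*p)^p) * 4) * (2 * volume Q)) :=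
          mul_le_mul_right hint3 _
      _ = (CC n^p * ENNReal.ofReal (2*(2*p)^p) * 8) * ((volume Q)⁻¹ * volume Q) := by ring
      _ = CC n^p * ENNReal.ofReal (2*(2*p)^p) * 8 := by
          rw [ENNReal.inv_mul_cancel hvolQ0 hvolQt, mul_one]
  have hkey : CC n^p * ENNReal.ofReal (2*(2*p)^p) * 8
      ≤ ((16:ℝ≥0∞) * CC n * ENNReal.ofReal (2*p))^p := by
    have h1 : ((16:ℝ≥0∞) * CC n * ENNReal.ofReal (2*p))^p
        = (16:ℝ≥0∞)^p * CC n^p * ENNReal.ofReal (2*p)^p := by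
      rw [ENNReal.mul_rpow_of_ne_top (ENNReal.mul_ne_top (by norm_num) CC_ne_top)
        ENNReal.ofReal_ne_top, ENNReal.mul_rpow_of_ne_top (by norm_num) CC_ne_top]
    rw [h1]
    have h2 : ENNReal.ofReal (2*(2*p)^p) = 2 * ENNReal.ofReal (2*p)^p := by
      rw [ENNReal.ofReal_mul (by norm_num), ENNReal.ofReal_rpow_of_nonneg (by linarith)
        (by linarith)]
      norm_num
    rw [h2]
    calc CC n^p * (2 * ENNReal.ofReal (2*p)^p) * 8
        = 16 * CC n^p * ENNReal.ofReal (2*p)^p := by ring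
      _ ≤ (16:ℝ≥0∞)^p * CC n^p * ENNReal.ofReal (2*p)^p := by
          refine mul_le_mul_left (mul_le_mul_left ?_ _) _
          calc (16:ℝ≥0∞) = 16^(1:ℝ) := (ENNReal.rpow_one _).symm
            _ ≤ 16^p := ENNReal.rpow_le_rpow_of_exponent_le (by norm_num) hp
  have hconst : (16:ℝ≥0∞) * CC n * ENNReal.ofReal (2*p)
      = ENNReal.ofReal ((64 * 104 ^ n : ℝ) * p) := by
    have h104 : ENNReal.ofReal ((104:ℝ)^n) = (8:ℝ≥0∞)^n * 13^n := by
      rw [show ((104:ℝ)) = 8*13 by norm_num, mul_pow,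
        ENNReal.ofReal_mul (by positivity), ENNReal.ofReal_pow (by norm_num),
        ENNReal.ofReal_pow (by norm_num)]
      norm_num
    have hR : ENNReal.ofReal ((64 * 104 ^ n : ℝ) * p)
        = 64 * ((8:ℝ≥0∞)^n * 13^n) * ENNReal.ofReal p := by
      rw [show ((64 * 104 ^ n : ℝ) * p) = (64:ℝ) * ((104:ℝ)^n * p) by ring]
      rw [ENNReal.ofReal_mul (by norm_num : (0:ℝ) ≤ 64)]
      rw [ENNReal.ofReal_mul (by positivity : (0:ℝ) ≤ (104:ℝ)^n)]
      rw [h104]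
      simp only [ENNReal.ofReal_ofNat]
      ring
    have hL2 : ENNReal.ofReal (2*p) = 2 * ENNReal.ofReal p := by
      rw [ENNReal.ofReal_mul (by norm_num : (0:ℝ) ≤ 2)]
      norm_num
    rw [hL2, hR, CC, AA]
    ring
  calc ((volume Q)⁻¹ *
      ∫⁻ x in Q, (mxF (Q.indicator fun y => f y - avg f Q) x / sharp f x) ^ p) ^ (1/p)
      ≤ (((16:ℝ≥0∞) * CC n * ENNReal.ofReal (2*p))^p) ^ (1/p) :=
        ENNReal.rpow_le_rpow (hfinal1.trans hkey) (by positivity)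
    _ = (16:ℝ≥0∞) * CC n * ENNReal.ofReal (2*p) := by
        rw [← ENNReal.rpow_mul, mul_one_div, div_self hp0.ne', ENNReal.rpow_one]
    _ = ENNReal.ofReal ((64 * 104 ^ n : ℝ) * p) := hconst

end Stmt9

/-- There is a dimensional constant `C_n > 0` such that for
every nonconstant locally integrable `f`, every cube `Q` and every `1 ≤ p < ∞`,
`((1/|Q|) ∫_Q (M((f - f_Q)χ_Q)/M^♯f)^p)^(1/p) ≤ C_n p`. -/
theorem stmt9 (n : ℕ) :
    ∃ C : ℝ, 0 < C ∧
      ∀ f : (Fin n → ℝ) → ℝ, LocallyIntegrable f volume →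
        (¬ ∃ a : ℝ, f =ᵐ[volume] fun _ => a) →
        ∀ Q : Set (Fin n → ℝ), IsCube Q →
          ∀ p : ℝ, 1 ≤ p →
            ((volume Q)⁻¹ *
                ∫⁻ x in Q,
                  (mxF (Q.indicator fun y => f y - avg f Q) x / sharp f x) ^ p) ^ (1 / p)
              ≤ ENNReal.ofReal (C * p) :=
  ⟨64 * 104 ^ n, by positivity, Stmt9.final⟩

end
end

section
/- There exists a dimensional constant c_n > 0 with the following property. Let f : ℝⁿ → ℝ be locally integrable with Mf not identically infinite, let Q ⊂ ℝⁿ be a cube, let 3Q be the cube with the same center as Q and side length 3ℓ(Q), and define g = f_{3Q} χ_{3Q} + f χ_{(3Q)^c}. Then for every x ∈ Q, Mg(x) ≤ c_n · M^# f(x) + essinf_Q Mf. -/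
open MeasureTheory ENNReal

noncomputable section

lemma le_mxF {n : ℕ} (f : (Fin n → ℝ) → ℝ) {x : Fin n → ℝ} {K : Set (Fin n → ℝ)}
    (hK : IsCube K) (hx : x ∈ K) :
    (volume K)⁻¹ * ∫⁻ y in K, ENNReal.ofReal |f y| ≤ mxF f x :=
  le_iSup_of_le K (le_iSup_of_le hK (le_iSup_of_le hx le_rfl))

lemma le_sharp {n : ℕ} (f : (Fin n → ℝ) → ℝ) {x : Fin n → ℝ} {K : Set (Fin n → ℝ)}
    (hK : IsCube K) (hx : x ∈ K) :
    (volume K)⁻¹ * ∫⁻ y in K, ENNReal.ofReal |f y - avg f K| ≤ sharp f x :=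
  le_iSup_of_le K (le_iSup_of_le hK (le_iSup_of_le hx le_rfl))

lemma avg_bound {n : ℕ} {f : (Fin n → ℝ) → ℝ} {K : Set (Fin n → ℝ)}
    (hK : IntegrableOn f K) (h0 : volume K ≠ 0) (ht : volume K ≠ ⊤) :
    ENNReal.ofReal |avg f K| ≤ (volume K)⁻¹ * ∫⁻ y in K, ENNReal.ofReal |f y| := by
  have htr : (0:ℝ) < (volume K).toReal := toReal_pos h0 ht
  have h1 : |avg f K| ≤ (volume K).toReal⁻¹ * ∫ y in K, |f y| := by
    rw [avg, abs_mul, abs_of_nonneg (inv_nonneg.2 toReal_nonneg)]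
    gcongr
    simpa using norm_integral_le_integral_norm (μ := volume.restrict K) f
  calc ENNReal.ofReal |avg f K| ≤ ENNReal.ofReal ((volume K).toReal⁻¹ * ∫ y in K, |f y|) :=
        ENNReal.ofReal_le_ofReal h1
    _ = ENNReal.ofReal (volume K).toReal⁻¹ * ENNReal.ofReal (∫ y in K, |f y|) :=
        ENNReal.ofReal_mul (by positivity)
    _ = (volume K)⁻¹ * ∫⁻ y in K, ENNReal.ofReal |f y| := by
        rw [ENNReal.ofReal_inv_of_pos htr, ofReal_toReal ht,
          ofReal_integral_eq_lintegral_ofReal hK.abs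
            (Filter.Eventually.of_forall fun y => abs_nonneg _)]

lemma split_bound {n : ℕ} (f : (Fin n → ℝ) → ℝ) (c : ℝ) (K : Set (Fin n → ℝ)) :
    ∫⁻ y in K, ENNReal.ofReal |f y| ≤
      (∫⁻ y in K, ENNReal.ofReal |f y - c|) + volume K * ENNReal.ofReal |c| := by
  calc ∫⁻ y in K, ENNReal.ofReal |f y|
      ≤ ∫⁻ y in K, (ENNReal.ofReal |f y - c| + ENNReal.ofReal |c|) := by
        refine lintegral_mono fun y => ?_
        rw [← ENNReal.ofReal_add (abs_nonneg _) (abs_nonneg _)]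
        exact ENNReal.ofReal_le_ofReal (by
          calc |f y| = |(f y - c) + c| := by ring_nf
            _ ≤ |f y - c| + |c| := abs_add_le _ _)
    _ = (∫⁻ y in K, ENNReal.ofReal |f y - c|) + volume K * ENNReal.ofReal |c| := by
        rw [lintegral_add_right _ measurable_const, setLIntegral_const, mul_comm]

/-- There is a dimensional constant `c_n > 0` with the
following property.  Let `f` be locally integrable with `Mf` not identically
infinite, let `Q` be a cube (with lower corner `a` and side length `l > 0`),
let `3Q` be the concentric cube of side length `3l`, and let
`g = f_{3Q} χ_{3Q} + f χ_{(3Q)ᶜ}`.  Then for every `x ∈ Q`,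
`Mg(x) ≤ c_n M^♯f(x) + essinf_Q Mf`. -/
theorem stmt10 (n : ℕ) :
    ∃ c : ℝ, 0 < c ∧
      ∀ f : (Fin n → ℝ) → ℝ, LocallyIntegrable f volume →
        (∃ x, mxF f x ≠ ⊤) →
        ∀ (a : Fin n → ℝ) (l : ℝ), 0 < l →
          ∀ Q Q3 : Set (Fin n → ℝ),
            Q = Set.univ.pi (fun i => Set.Icc (a i) (a i + l)) →
            Q3 = Set.univ.pi (fun i => Set.Icc (a i - l) (a i + 2 * l)) →
            ∀ g : (Fin n → ℝ) → ℝ,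
              g = (fun y => Q3.indicator (fun _ => avg f Q3) y + Q3ᶜ.indicator f y) →
              ∀ x ∈ Q,
                mxF g x ≤
                  ENNReal.ofReal c * sharp f x + essInf (mxF f) (volume.restrict Q) := by
  refine ⟨2 * 3 ^ n, by positivity, ?_⟩
  intro f hf _ a l hl Q Q3 hQ hQ3 g hg x hxQ
  -- generic cube facts
  have hvol : ∀ (b : Fin n → ℝ) (m : ℝ),
      volume (Set.univ.pi fun i => Set.Icc (b i) (b i + m)) = ENNReal.ofReal m ^ n := by
    intro b m; rw [volume_pi_pi]; simp [Real.volume_Icc]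
  have hint : ∀ (b : Fin n → ℝ) (m : ℝ),
      IntegrableOn f (Set.univ.pi fun i => Set.Icc (b i) (b i + m)) := by
    intro b m
    exact hf.integrableOn_isCompact (by rw [Set.pi_univ_Icc]; exact isCompact_Icc)
  have hvne : ∀ m : ℝ, 0 < m → (ENNReal.ofReal m ^ n ≠ 0 ∧ ENNReal.ofReal m ^ n ≠ ⊤) :=
    fun m hm => ⟨pow_ne_zero _ (ENNReal.ofReal_pos.mpr hm).ne', pow_ne_top ofReal_ne_top⟩
  -- Q3 as a cube with corner `a - l` and side `3l`
  have hQ3' : Q3 = Set.univ.pi fun i => Set.Icc ((fun i => a i - l) i) ((fun i => a i - l) i + 3 * l) := by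
    rw [hQ3]
    simp only [show ∀ t : ℝ, t - l + 3 * l = t + 2 * l from fun t => by ring]
  have hQ3cube : IsCube Q3 := ⟨fun i => a i - l, 3 * l, by linarith, hQ3'⟩
  have hQ3vol : volume Q3 = ENNReal.ofReal (3 * l) ^ n := by rw [hQ3']; exact hvol _ _
  have hQ3meas : MeasurableSet Q3 := by
    rw [hQ3]; exact MeasurableSet.univ_pi fun i => measurableSet_Icc
  have hQmeas : MeasurableSet Q := by
    rw [hQ]; exact MeasurableSet.univ_pi fun i => measurableSet_Icc
  have hQ3int : IntegrableOn f Q3 := by rw [hQ3']; exact hint _ _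
  have hxQc : ∀ i, a i ≤ x i ∧ x i ≤ a i + l := by
    have h := hxQ; rw [hQ] at h
    simpa only [Set.mem_univ_pi, Set.mem_Icc] using h
  have hQQ3 : Q ⊆ Q3 := by
    rw [hQ, hQ3]; intro y hy
    simp only [Set.mem_univ_pi, Set.mem_Icc] at hy ⊢
    intro i
    constructor <;> linarith [(hy i).1, (hy i).2]
  have hxQ3 : x ∈ Q3 := hQQ3 hxQ
  -- lower bound for essInf
  have hess : ∀ c0 : ℝ≥0∞, (∀ y ∈ Q, c0 ≤ mxF f y) →
      c0 ≤ essInf (mxF f) (volume.restrict Q) := fun c0 h =>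
    le_essInf_of_ae_le c0 ((ae_restrict_mem hQmeas).mono fun y hy => h y hy)
  -- three-to-the-n
  have h3n : (3 : ℝ≥0∞) ^ n ≠ 0 := by positivity
  have h3nt : (3 : ℝ≥0∞) ^ n ≠ ⊤ := pow_ne_top (by simp)
  have h3m : ∀ m : ℝ, 0 ≤ m → ENNReal.ofReal (3 * m) ^ n = 3 ^ n * ENNReal.ofReal m ^ n := by
    intro m hm
    rw [ENNReal.ofReal_mul (by norm_num), ← mul_pow]
    norm_num
  -- main: bound each term of the sup defining mxF g x
  unfold mxF
  refine iSup_le fun R => iSup_le fun hR => iSup_le fun hxR => ?_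
  obtain ⟨b, m, hm, rfl⟩ := hR
  have hxRc : ∀ i, b i ≤ x i ∧ x i ≤ b i + m := by
    have h := hxR
    simpa only [Set.mem_univ_pi, Set.mem_Icc] using h
  have hRmeas : MeasurableSet (Set.univ.pi fun i => Set.Icc (b i) (b i + m)) :=
    MeasurableSet.univ_pi fun i => measurableSet_Icc
  have hRvol : volume (Set.univ.pi fun i => Set.Icc (b i) (b i + m)) = ENNReal.ofReal m ^ n :=
    hvol b m
  obtain ⟨hR0, hRt⟩ := hvne m hm
  rcases le_or_gt m l with hml | hlm
  · -- small cube: R ⊆ Q3, where g is constant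
    have hRQ3 : (Set.univ.pi fun i => Set.Icc (b i) (b i + m)) ⊆ Q3 := by
      rw [hQ3]; intro y hy
      simp only [Set.mem_univ_pi, Set.mem_Icc] at hy ⊢
      intro i
      constructor <;>
        linarith [(hy i).1, (hy i).2, (hxRc i).1, (hxRc i).2, (hxQc i).1, (hxQc i).2]
    have hgy : ∀ y ∈ (Set.univ.pi fun i => Set.Icc (b i) (b i + m)),
        ENNReal.ofReal |g y| = ENNReal.ofReal |avg f Q3| := by
      intro y hy
      have hyQ3 : y ∈ Q3 := hRQ3 hy
      rw [hg]
      simp [Set.indicator_of_mem hyQ3, Set.indicator_of_notMem (Set.notMem_compl_iff.mpr hyQ3)]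
    have hI : ∫⁻ y in (Set.univ.pi fun i => Set.Icc (b i) (b i + m)), ENNReal.ofReal |g y|
        = ENNReal.ofReal |avg f Q3| * volume (Set.univ.pi fun i => Set.Icc (b i) (b i + m)) := by
      rw [setLIntegral_congr_fun hRmeas hgy, setLIntegral_const]
    rw [hI, ← mul_assoc, mul_comm ((volume (Set.univ.pi fun i => Set.Icc (b i) (b i + m)))⁻¹),
      mul_assoc, ENNReal.inv_mul_cancel (hRvol ▸ hR0) (hRvol ▸ hRt), mul_one]
    have hQ3v0 := (hvne (3 * l) (by linarith)).1
    have hQ3vt := (hvne (3 * l) (by linarith)).2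
    have h1 : ENNReal.ofReal |avg f Q3| ≤ (volume Q3)⁻¹ * ∫⁻ y in Q3, ENNReal.ofReal |f y| :=
      avg_bound hQ3int (hQ3vol ▸ hQ3v0) (hQ3vol ▸ hQ3vt)
    have h2 : (volume Q3)⁻¹ * (∫⁻ y in Q3, ENNReal.ofReal |f y|)
        ≤ essInf (mxF f) (volume.restrict Q) :=
      hess _ fun y hy => le_mxF f hQ3cube (hQQ3 hy)
    exact (h1.trans h2).trans (self_le_add_left _ _)
  · -- big cube: use R3, the concentric triple of R
    set R3 : Set (Fin n → ℝ) :=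
      Set.univ.pi fun i => Set.Icc ((fun i => b i - m) i) ((fun i => b i - m) i + 3 * m) with hR3
    have hR3cube : IsCube R3 := ⟨fun i => b i - m, 3 * m, by linarith, rfl⟩
    have hR3vol : volume R3 = 3 ^ n * ENNReal.ofReal m ^ n := by
      rw [hR3, hvol, h3m m hm.le]
    have hR3meas : MeasurableSet R3 := MeasurableSet.univ_pi fun i => measurableSet_Icc
    have hR3int : IntegrableOn f R3 := hint _ _
    have hRR3 : (Set.univ.pi fun i => Set.Icc (b i) (b i + m)) ⊆ R3 := by
      rw [hR3]; intro y hy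
      simp only [Set.mem_univ_pi, Set.mem_Icc] at hy ⊢
      intro i
      constructor <;> linarith [(hy i).1, (hy i).2]
    have hQR3 : Q ⊆ R3 := by
      rw [hQ, hR3]; intro y hy
      simp only [Set.mem_univ_pi, Set.mem_Icc] at hy ⊢
      intro i
      constructor <;>
        linarith [(hy i).1, (hy i).2, (hxRc i).1, (hxRc i).2, (hxQc i).1, (hxQc i).2]
    have hxR3 : x ∈ R3 := hRR3 hxR
    have hR3v0 : volume R3 ≠ 0 := by rw [hR3vol]; exact mul_ne_zero h3n hR0
    have hR3vt : volume R3 ≠ ⊤ := by rw [hR3vol]; exact ENNReal.mul_ne_top h3nt hRt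
    -- pointwise bound on |g|
    have hgpt : ∀ y, ENNReal.ofReal |g y| ≤ ENNReal.ofReal |f y| +
        Q3.indicator (fun z => ENNReal.ofReal |f z - avg f Q3|) y := by
      intro y
      by_cases hy : y ∈ Q3
      · rw [hg]
        simp only [Set.indicator_of_mem hy, Set.indicator_of_notMem (Set.notMem_compl_iff.mpr hy),
          add_zero]
        rw [← ENNReal.ofReal_add (abs_nonneg _) (abs_nonneg _)]
        refine ENNReal.ofReal_le_ofReal ?_
        calc |avg f Q3| = |f y + (avg f Q3 - f y)| := by ring_nf
          _ ≤ |f y| + |avg f Q3 - f y| := abs_add_le _ _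
          _ = |f y| + |f y - avg f Q3| := by rw [abs_sub_comm]
      · rw [hg]
        simp [Set.indicator_of_notMem hy, Set.indicator_of_mem (Set.mem_compl hy)]
    have hfm : AEMeasurable (fun y => ENNReal.ofReal |f y|)
        (volume.restrict (Set.univ.pi fun i => Set.Icc (b i) (b i + m))) :=
      by
      have h : AEMeasurable (fun y => ENNReal.ofReal ‖f y‖) volume :=
        hf.aestronglyMeasurable.norm.aemeasurable.ennreal_ofReal
      simp only [Real.norm_eq_abs] at h
      exact h.restrict
    -- split the integral of |g|
    have hsplit : ∫⁻ y in (Set.univ.pi fun i => Set.Icc (b i) (b i + m)), ENNReal.ofReal |g y|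
        ≤ (∫⁻ y in (Set.univ.pi fun i => Set.Icc (b i) (b i + m)), ENNReal.ofReal |f y|)
          + ∫⁻ y in Q3, ENNReal.ofReal |f y - avg f Q3| := by
      calc ∫⁻ y in (Set.univ.pi fun i => Set.Icc (b i) (b i + m)), ENNReal.ofReal |g y|
          ≤ ∫⁻ y in (Set.univ.pi fun i => Set.Icc (b i) (b i + m)),
            (ENNReal.ofReal |f y| + Q3.indicator (fun z => ENNReal.ofReal |f z - avg f Q3|) y) :=
            lintegral_mono hgpt
        _ = (∫⁻ y in (Set.univ.pi fun i => Set.Icc (b i) (b i + m)), ENNReal.ofReal |f y|)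
            + ∫⁻ y in (Set.univ.pi fun i => Set.Icc (b i) (b i + m)),
              Q3.indicator (fun z => ENNReal.ofReal |f z - avg f Q3|) y :=
            lintegral_add_left' hfm _
        _ ≤ _ := by
            refine add_le_add_right ?_ _
            rw [lintegral_indicator hQ3meas, Measure.restrict_restrict hQ3meas]
            exact lintegral_mono' (Measure.restrict_mono Set.inter_subset_left le_rfl) le_rfl
    -- constant comparison: (vol R)⁻¹ = 3^n * (vol R3)⁻¹ and ≤ 3^n * (vol Q3)⁻¹
    have hinvR3 : (ENNReal.ofReal m ^ n)⁻¹ = 3 ^ n * (volume R3)⁻¹ := by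
      rw [hR3vol, ENNReal.mul_inv (Or.inl h3n) (Or.inl h3nt), ← mul_assoc,
        ENNReal.mul_inv_cancel h3n h3nt, one_mul]
    have hinvQ3 : (ENNReal.ofReal m ^ n)⁻¹ ≤ 3 ^ n * (volume Q3)⁻¹ := by
      rw [hQ3vol, h3m l hl.le, ENNReal.mul_inv (Or.inl h3n) (Or.inl h3nt), ← mul_assoc,
        ENNReal.mul_inv_cancel h3n h3nt, one_mul]
      exact ENNReal.inv_le_inv.mpr (pow_le_pow_left' (ENNReal.ofReal_le_ofReal hlm.le) n)
    -- term B
    have hB : (ENNReal.ofReal m ^ n)⁻¹ * ∫⁻ y in Q3, ENNReal.ofReal |f y - avg f Q3|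
        ≤ 3 ^ n * sharp f x := by
      calc (ENNReal.ofReal m ^ n)⁻¹ * ∫⁻ y in Q3, ENNReal.ofReal |f y - avg f Q3|
          ≤ (3 ^ n * (volume Q3)⁻¹) * ∫⁻ y in Q3, ENNReal.ofReal |f y - avg f Q3| :=
            mul_le_mul_left hinvQ3 _
        _ = 3 ^ n * ((volume Q3)⁻¹ * ∫⁻ y in Q3, ENNReal.ofReal |f y - avg f Q3|) := by
            rw [mul_assoc]
        _ ≤ 3 ^ n * sharp f x := mul_le_mul_right (le_sharp f hQ3cube hxQ3) _
    -- term A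
    have hA : (ENNReal.ofReal m ^ n)⁻¹ *
        ∫⁻ y in (Set.univ.pi fun i => Set.Icc (b i) (b i + m)), ENNReal.ofReal |f y|
        ≤ 3 ^ n * sharp f x + essInf (mxF f) (volume.restrict Q) := by
      have hs := split_bound f (avg f R3) (Set.univ.pi fun i => Set.Icc (b i) (b i + m))
      calc (ENNReal.ofReal m ^ n)⁻¹ *
          ∫⁻ y in (Set.univ.pi fun i => Set.Icc (b i) (b i + m)), ENNReal.ofReal |f y|
          ≤ (ENNReal.ofReal m ^ n)⁻¹ *
            ((∫⁻ y in (Set.univ.pi fun i => Set.Icc (b i) (b i + m)),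
              ENNReal.ofReal |f y - avg f R3|)
              + volume (Set.univ.pi fun i => Set.Icc (b i) (b i + m))
                * ENNReal.ofReal |avg f R3|) := mul_le_mul_right hs _
        _ = (ENNReal.ofReal m ^ n)⁻¹ *
              (∫⁻ y in (Set.univ.pi fun i => Set.Icc (b i) (b i + m)),
                ENNReal.ofReal |f y - avg f R3|)
            + ENNReal.ofReal |avg f R3| := by
            rw [mul_add, hRvol, ← mul_assoc, ENNReal.inv_mul_cancel hR0 hRt, one_mul]
        _ ≤ 3 ^ n * ((volume R3)⁻¹ * ∫⁻ y in R3, ENNReal.ofReal |f y - avg f R3|)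
            + (volume R3)⁻¹ * ∫⁻ y in R3, ENNReal.ofReal |f y| := by
            refine add_le_add ?_ (avg_bound hR3int hR3v0 hR3vt)
            rw [hinvR3, mul_assoc]
            refine mul_le_mul_right (mul_le_mul_right ?_ _) _
            exact lintegral_mono' (Measure.restrict_mono hRR3 le_rfl) le_rfl
        _ ≤ 3 ^ n * sharp f x + essInf (mxF f) (volume.restrict Q) := by
            refine add_le_add (mul_le_mul_right (le_sharp f hR3cube hxR3) _) ?_
            exact hess _ fun y hy => le_mxF f hR3cube (hQR3 hy)
    -- combine
    calc (volume (Set.univ.pi fun i => Set.Icc (b i) (b i + m)))⁻¹ *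
        ∫⁻ y in (Set.univ.pi fun i => Set.Icc (b i) (b i + m)), ENNReal.ofReal |g y|
        ≤ (ENNReal.ofReal m ^ n)⁻¹ *
          ((∫⁻ y in (Set.univ.pi fun i => Set.Icc (b i) (b i + m)), ENNReal.ofReal |f y|)
            + ∫⁻ y in Q3, ENNReal.ofReal |f y - avg f Q3|) := by
          rw [hRvol]; exact mul_le_mul_right hsplit _
      _ = (ENNReal.ofReal m ^ n)⁻¹ *
            (∫⁻ y in (Set.univ.pi fun i => Set.Icc (b i) (b i + m)), ENNReal.ofReal |f y|)
          + (ENNReal.ofReal m ^ n)⁻¹ * ∫⁻ y in Q3, ENNReal.ofReal |f y - avg f Q3| := mul_add _ _ _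
      _ ≤ (3 ^ n * sharp f x + essInf (mxF f) (volume.restrict Q)) + 3 ^ n * sharp f x :=
          add_le_add hA hB
      _ = ENNReal.ofReal (2 * 3 ^ n) * sharp f x + essInf (mxF f) (volume.restrict Q) := by
          rw [ENNReal.ofReal_mul (by norm_num), ENNReal.ofReal_pow (by norm_num)]
          norm_num
          ring


end
end

section
/- For every weight w on ℝⁿ there exist a locally integrable function f with ‖f‖_{BMO} = 1 and Mf not identically infinite, and a cube Q ⊂ ℝⁿ, such that (1/w(Q)) ∫_Q ( Mf(x) − essinf_Q Mf ) w(x) dx ≥ 1/2. In particular, sup_f ‖Mf‖_{BLO_w} ≥ 1/2, the supremum taken over all f with ‖f‖_{BMO} = 1 and Mf not identically infinite. -/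
open MeasureTheory ENNReal

noncomputable section

/-- The weighted BLO seminorm
`‖g‖_{BLO_w} = sup_Q (1/w(Q)) ∫_Q (g(x) - essinf_Q g) w(x) dx`
of an `ℝ≥0∞`-valued function `g`. -/
def bloW {n : ℕ} (w : (Fin n → ℝ) → ℝ) (g : (Fin n → ℝ) → ℝ≥0∞) : ℝ≥0∞ :=
  ⨆ (Q : Set (Fin n → ℝ)) (_ : IsCube Q),
    (wMeas w Q)⁻¹ *
      ∫⁻ x in Q, (g x - essInf g (volume.restrict Q)) * ENNReal.ofReal (w x)

namespace Stmt11Aux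

open Set MeasureTheory

variable {n : ℕ}

/-- The slab `{x : a ≤ x i0 ≤ a + 1/2}`. -/
def slab (i0 : Fin n) (a : ℝ) : Set (Fin n → ℝ) := {x | x i0 ∈ Set.Icc a (a + 2⁻¹)}

/-- The BMO-normalized function `2 χ_slab`. -/
def ff (i0 : Fin n) (a : ℝ) : (Fin n → ℝ) → ℝ := (slab i0 a).indicator fun _ => 2

lemma slab_meas (i0 : Fin n) (a : ℝ) : MeasurableSet (slab i0 a) :=
  measurable_pi_apply i0 measurableSet_Icc

lemma ff_meas (i0 : Fin n) (a : ℝ) : Measurable (ff i0 a) :=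
  measurable_const.indicator (slab_meas i0 a)

lemma volume_cube (b : Fin n → ℝ) (l : ℝ) :
    volume (Set.univ.pi fun i => Set.Icc (b i) (b i + l)) = ENNReal.ofReal l ^ n := by
  rw [volume_pi_pi]
  simp [Real.volume_Icc]

lemma cube_meas (b : Fin n → ℝ) (l : ℝ) :
    MeasurableSet (Set.univ.pi fun i => Set.Icc (b i) (b i + l)) :=
  MeasurableSet.univ_pi fun i => measurableSet_Icc

lemma cube_vol_ne_zero (b : Fin n → ℝ) {l : ℝ} (hl : 0 < l) :
    volume (Set.univ.pi fun i => Set.Icc (b i) (b i + l)) ≠ 0 := by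
  rw [volume_cube]
  exact pow_ne_zero _ (by simp [ENNReal.ofReal_eq_zero, not_le, hl])

lemma cube_vol_ne_top (b : Fin n → ℝ) (l : ℝ) :
    volume (Set.univ.pi fun i => Set.Icc (b i) (b i + l)) ≠ ⊤ := by
  rw [volume_cube]
  exact pow_ne_top ENNReal.ofReal_ne_top

lemma prod_ite_fin (i0 : Fin n) (u v : ℝ≥0∞) :
    (∏ i : Fin n, if i = i0 then u else v) = u * v ^ (n - 1) := by
  rw [← Finset.mul_prod_erase Finset.univ _ (Finset.mem_univ i0), if_pos rfl]
  congr 1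
  rw [Finset.prod_congr rfl (fun i hi => if_neg (Finset.ne_of_mem_erase hi)), Finset.prod_const,
    Finset.card_erase_of_mem (Finset.mem_univ i0), Finset.card_univ, Fintype.card_fin]

lemma slab_eq_pi (i0 : Fin n) (a : ℝ) :
    slab i0 a = Set.univ.pi (fun i => if i = i0 then Set.Icc a (a + 2⁻¹) else Set.univ) := by
  ext x
  simp only [slab, Set.mem_setOf_eq, Set.mem_pi, Set.mem_univ, forall_true_left]
  constructor
  · intro h i
    by_cases hi : i = i0
    · subst hi; simpa using h
    · simp [hi]
  · intro h
    have := h i0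
    simpa using this

lemma vol_inter (i0 : Fin n) (a : ℝ) (b : Fin n → ℝ) (l : ℝ) :
    volume ((Set.univ.pi fun i => Set.Icc (b i) (b i + l)) ∩ slab i0 a)
      = ENNReal.ofReal (min (b i0 + l) (a + 2⁻¹) - max (b i0) a) * ENNReal.ofReal l ^ (n - 1) := by
  rw [slab_eq_pi, ← Set.pi_inter_distrib, volume_pi_pi]
  have h : ∀ i : Fin n,
      volume (Set.Icc (b i) (b i + l) ∩ (if i = i0 then Set.Icc a (a + 2⁻¹) else Set.univ))
        = if i = i0 then ENNReal.ofReal (min (b i0 + l) (a + 2⁻¹) - max (b i0) a)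
          else ENNReal.ofReal l := by
    intro i
    by_cases hi : i = i0
    · subst hi
      rw [if_pos rfl, if_pos rfl, Set.Icc_inter_Icc, Real.volume_Icc]
    · rw [if_neg hi, if_neg hi, Set.inter_univ, Real.volume_Icc]
      simp
  rw [Finset.prod_congr rfl (fun i _ => h i), prod_ite_fin]

lemma lintegral_absf (i0 : Fin n) (a : ℝ) (T : Set (Fin n → ℝ)) :
    ∫⁻ y in T, ENNReal.ofReal |ff i0 a y| = 2 * volume (T ∩ slab i0 a) := by
  have h1 : ∀ y, ENNReal.ofReal |ff i0 a y| = (slab i0 a).indicator (fun _ => (2 : ℝ≥0∞)) y := by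
    intro y
    by_cases hy : y ∈ slab i0 a <;> simp [ff, Set.indicator, hy] <;> norm_num
  simp_rw [h1]
  rw [lintegral_indicator (slab_meas i0 a), Measure.restrict_restrict (slab_meas i0 a),
    setLIntegral_const, Set.inter_comm]

lemma integral_f (i0 : Fin n) (a : ℝ) (T : Set (Fin n → ℝ)) :
    ∫ y in T, ff i0 a y = 2 * (volume (T ∩ slab i0 a)).toReal := by
  unfold ff
  rw [setIntegral_indicator (slab_meas i0 a), setIntegral_const, smul_eq_mul, mul_comm]
  rfl

lemma lintegral_abs_sub (i0 : Fin n) (a : ℝ) (T : Set (Fin n → ℝ)) (c : ℝ)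
    (hc0 : 0 ≤ c) (hc2 : c ≤ 2) :
    ∫⁻ y in T, ENNReal.ofReal |ff i0 a y - c|
      = ENNReal.ofReal (2 - c) * volume (T ∩ slab i0 a)
        + ENNReal.ofReal c * volume (T \ slab i0 a) := by
  have h1 : ∀ y, ENNReal.ofReal |ff i0 a y - c|
      = (slab i0 a).indicator (fun _ => ENNReal.ofReal (2 - c)) y
        + (slab i0 a)ᶜ.indicator (fun _ => ENNReal.ofReal c) y := by
    intro y
    by_cases hy : y ∈ slab i0 a
    · simp [ff, Set.indicator, hy, abs_of_nonneg (by linarith : (0:ℝ) ≤ 2 - c)]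
    · simp [ff, Set.indicator, hy, zero_sub, abs_neg, abs_of_nonneg hc0]
  simp_rw [h1]
  rw [lintegral_add_left (measurable_const.indicator (slab_meas i0 a)),
    lintegral_indicator (slab_meas i0 a), lintegral_indicator (slab_meas i0 a).compl,
    Measure.restrict_restrict (slab_meas i0 a),
    Measure.restrict_restrict (slab_meas i0 a).compl,
    setLIntegral_const, setLIntegral_const, Set.inter_comm, Set.inter_comm ((slab i0 a)ᶜ),
    ← Set.diff_eq]


lemma bmo_term_le (i0 : Fin n) (a : ℝ) (b : Fin n → ℝ) {l : ℝ} (hl : 0 < l) :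
    (volume (Set.univ.pi fun i => Set.Icc (b i) (b i + l)))⁻¹ *
      ∫⁻ y in (Set.univ.pi fun i => Set.Icc (b i) (b i + l)),
        ENNReal.ofReal |ff i0 a y - avg (ff i0 a) (Set.univ.pi fun i => Set.Icc (b i) (b i + l))|
      ≤ 1 := by
  set Q' : Set (Fin n → ℝ) := Set.univ.pi fun i => Set.Icc (b i) (b i + l) with hQ'
  set V : ℝ≥0∞ := volume Q' with hV
  set A : ℝ≥0∞ := volume (Q' ∩ slab i0 a) with hA
  have hVtop : V ≠ ⊤ := cube_vol_ne_top b l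
  have hV0 : V ≠ 0 := cube_vol_ne_zero b hl
  have hAV : A ≤ V := measure_mono Set.inter_subset_left
  have hAtop : A ≠ ⊤ := fun h => hVtop (top_le_iff.1 (h ▸ hAV))
  set α : ℝ := A.toReal with hα
  set v : ℝ := V.toReal with hv
  have hvpos : 0 < v := ENNReal.toReal_pos hV0 hVtop
  have hα0 : 0 ≤ α := ENNReal.toReal_nonneg
  have hαv : α ≤ v := ENNReal.toReal_mono hVtop hAV
  set c : ℝ := avg (ff i0 a) Q' with hcdef
  have hc : c = v⁻¹ * (2 * α) := by
    rw [hcdef]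
    unfold avg
    rw [integral_f]
  have hc0 : 0 ≤ c := by
    rw [hc]
    positivity
  have hc2 : c ≤ 2 := by
    have h1 : v⁻¹ * (2 * α) ≤ v⁻¹ * (2 * v) :=
      mul_le_mul_of_nonneg_left (by linarith) (inv_nonneg.2 hvpos.le)
    have h2 : v⁻¹ * (2 * v) = 2 := by field_simp
    rw [hc]; linarith
  have hcv : c * v = 2 * α := by rw [hc]; field_simp
  rw [lintegral_abs_sub i0 a Q' c hc0 hc2]
  have hdiff : volume (Q' \ slab i0 a) = V - A := by
    rw [← Set.diff_self_inter, measure_diff Set.inter_subset_left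
      ((cube_meas b l).inter (slab_meas i0 a)).nullMeasurableSet hAtop]
  rw [hdiff, ← hA]
  have hAo : A = ENNReal.ofReal α := (ENNReal.ofReal_toReal hAtop).symm
  have hVo : V = ENNReal.ofReal v := (ENNReal.ofReal_toReal hVtop).symm
  have hVA : V - A = ENNReal.ofReal (v - α) := by
    rw [hAo, hVo, ← ENNReal.ofReal_sub _ hα0]
  have key : (2 - c) * α + c * (v - α) ≤ v := by
    have h3 : ((2 - c) * α + c * (v - α)) * v ≤ v * v := by
      have h4 : ((2 - c) * α + c * (v - α)) * v = 2 * α * v + (c * v) * (v - 2 * α) := by ring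
      rw [h4, hcv]
      nlinarith [sq_nonneg (v - 2 * α)]
    exact le_of_mul_le_mul_right (by linarith) hvpos
  calc V⁻¹ * (ENNReal.ofReal (2 - c) * A + ENNReal.ofReal c * (V - A))
      = V⁻¹ * ENNReal.ofReal ((2 - c) * α + c * (v - α)) := by
        rw [hVA, hAo, ← ENNReal.ofReal_mul (by linarith : (0:ℝ) ≤ 2 - c),
          ← ENNReal.ofReal_mul hc0, ← ENNReal.ofReal_add (mul_nonneg (by linarith) hα0) (mul_nonneg hc0 (by linarith))]
    _ ≤ V⁻¹ * V := by
        rw [hVo]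
        exact mul_le_mul_right (ENNReal.ofReal_le_ofReal (by simpa [hVo] using key)) _
    _ = 1 := ENNReal.inv_mul_cancel hV0 hVtop

lemma bmo_term_Q_eq (i0 : Fin n) {a : ℝ} (ha0 : 0 ≤ a) (ha1 : a + 2⁻¹ ≤ 1) :
    (volume (Set.univ.pi fun i : Fin n => Set.Icc ((0:ℝ)) (0 + 1)))⁻¹ *
      ∫⁻ y in (Set.univ.pi fun i : Fin n => Set.Icc ((0:ℝ)) (0 + 1)),
        ENNReal.ofReal |ff i0 a y - avg (ff i0 a) (Set.univ.pi fun i : Fin n => Set.Icc ((0:ℝ)) (0 + 1))|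
      = 1 := by
  set Q : Set (Fin n → ℝ) := Set.univ.pi fun i : Fin n => Set.Icc ((0:ℝ)) (0 + 1) with hQdef
  have hQb : Q = Set.univ.pi fun i : Fin n => Set.Icc (((fun _ => (0:ℝ)) : Fin n → ℝ) i)
      (((fun _ => (0:ℝ)) : Fin n → ℝ) i + 1) := rfl
  have hVol : volume Q = 1 := by
    rw [hQb, volume_cube]
    simp
  have hInter : volume (Q ∩ slab i0 a) = ENNReal.ofReal 2⁻¹ := by
    rw [hQb, vol_inter]
    have h1 : min ((0:ℝ) + 1) (a + 2⁻¹) = a + 2⁻¹ := min_eq_right (by linarith)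
    have h2 : max (0:ℝ) a = a := max_eq_right ha0
    simp only [h1, h2]
    simp
  have havg : avg (ff i0 a) Q = 1 := by
    unfold avg
    rw [integral_f, hVol, hInter]
    simp [ENNReal.toReal_ofReal]
  rw [havg]
  have h1 : ∀ y, ENNReal.ofReal |ff i0 a y - 1| = 1 := by
    intro y
    by_cases hy : y ∈ slab i0 a <;> simp [ff, Set.indicator, hy] <;> norm_num
  simp_rw [h1]
  rw [setLIntegral_one, hVol]
  simp


lemma bmo_ff (i0 : Fin n) {a : ℝ} (ha0 : 0 ≤ a) (ha1 : a + 2⁻¹ ≤ 1) :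
    bmo (ff i0 a) = 1 := by
  apply le_antisymm
  · refine iSup_le fun Q' => iSup_le fun hQ' => ?_
    obtain ⟨b, l, hl, rfl⟩ := hQ'
    exact bmo_term_le i0 a b hl
  · have h := bmo_term_Q_eq (n := n) i0 ha0 ha1
    calc (1:ℝ≥0∞) = _ := h.symm
      _ ≤ bmo (ff i0 a) :=
        le_iSup₂_of_le (Set.univ.pi fun _ : Fin n => Set.Icc ((0:ℝ)) (0 + 1))
          ⟨fun _ => 0, 1, one_pos, rfl⟩ le_rfl

lemma mxF_le_two (i0 : Fin n) (a : ℝ) (x : Fin n → ℝ) : mxF (ff i0 a) x ≤ 2 := by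
  refine iSup_le fun Q' => iSup_le fun hQ' => iSup_le fun hx => ?_
  obtain ⟨b, l, hl, rfl⟩ := hQ'
  rw [lintegral_absf]
  calc (volume (Set.univ.pi fun i => Set.Icc (b i) (b i + l)))⁻¹ *
        (2 * volume ((Set.univ.pi fun i => Set.Icc (b i) (b i + l)) ∩ slab i0 a))
      ≤ (volume (Set.univ.pi fun i => Set.Icc (b i) (b i + l)))⁻¹ *
        (2 * volume (Set.univ.pi fun i => Set.Icc (b i) (b i + l))) := by
        exact mul_le_mul_right (mul_le_mul_right (measure_mono Set.inter_subset_left) 2) _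
    _ = 2 := by
        rw [mul_comm (2:ℝ≥0∞), ← mul_assoc,
          ENNReal.inv_mul_cancel (cube_vol_ne_zero b hl) (cube_vol_ne_top b l), one_mul]

lemma mxF_eq_two (i0 : Fin n) (a : ℝ) (x : Fin n → ℝ) (hx : x ∈ slab i0 a) :
    mxF (ff i0 a) x = 2 := by
  refine le_antisymm (mxF_le_two i0 a x) ?_
  set g : Fin n → ℝ := fun i => if i = i0 then a else x i - 4⁻¹ with hg
  set C : Set (Fin n → ℝ) := Set.univ.pi fun i => Set.Icc (g i) (g i + 2⁻¹) with hC
  have hcube : IsCube C := ⟨g, 2⁻¹, by norm_num, rfl⟩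
  have hxC : x ∈ C := by
    intro i _
    by_cases hi : i = i0
    · subst hi
      simpa [hg, slab] using hx
    · simp only [hg, if_neg hi]
      constructor <;> linarith
  have hsub : C ⊆ slab i0 a := by
    intro y hy
    have := hy i0 (Set.mem_univ i0)
    simpa [hg, slab] using this
  have hval : (volume C)⁻¹ * ∫⁻ y in C, ENNReal.ofReal |ff i0 a y| = 2 := by
    rw [lintegral_absf, Set.inter_eq_self_of_subset_left hsub, mul_comm (2:ℝ≥0∞), ← mul_assoc,
      ENNReal.inv_mul_cancel (cube_vol_ne_zero g (by norm_num)) (cube_vol_ne_top g 2⁻¹), one_mul]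
  calc (2:ℝ≥0∞) = _ := hval.symm
    _ ≤ mxF (ff i0 a) x := le_iSup_of_le C (le_iSup_of_le hcube (le_iSup_of_le hxC le_rfl))

lemma geom_core {c s l D : ℝ} (hc1 : 1 < c) (hc2 : c ≤ 2) (hl : 0 < l)
    (hs2 : s ≤ 2⁻¹) (hsl : s + (D - 2⁻¹) ≤ l) (hD : c⁻¹ ≤ D) :
    2 * s ≤ c * l := by
  have hcpos : 0 < c := by linarith
  have hinv : c * c⁻¹ = 1 := mul_inv_cancel₀ (ne_of_gt hcpos)
  have hci : 2⁻¹ ≤ c⁻¹ := by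
    have := one_div_le_one_div_of_le hcpos hc2
    simpa [one_div] using this
  have hd0 : 0 ≤ D - 2⁻¹ := by linarith
  rcases le_or_gt s 0 with hs | hs
  · nlinarith
  · have h1 : 2 * s * D ≤ l := by
      nlinarith [mul_nonneg (by linarith : (0:ℝ) ≤ 1 - 2 * s) hd0]
    have hDpos : 0 < D := lt_of_lt_of_le (inv_pos.2 hcpos) hD
    have h2 : l ≤ c * l * D := by
      have h3 : 0 ≤ c * (D - c⁻¹) * l := mul_nonneg (mul_nonneg hcpos.le (by linarith)) hl.le
      nlinarith [h3, hinv]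
    exact le_of_mul_le_mul_right (h1.trans h2) hDpos

lemma geom_right (i0 : Fin n) (a : ℝ) {c : ℝ} (hc1 : 1 < c) (hc2 : c ≤ 2)
    (b : Fin n → ℝ) {l : ℝ} (hl : 0 < l) (t : ℝ)
    (hmem : b i0 ≤ t ∧ t ≤ b i0 + l) (ht : a + c⁻¹ ≤ t) :
    2 * (min (b i0 + l) (a + 2⁻¹) - max (b i0) a) ≤ c * l := by
  have h1 : min (b i0 + l) (a + 2⁻¹) ≤ a + 2⁻¹ := min_le_right _ _
  have h2 : a ≤ max (b i0) a := le_max_right _ _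
  have h2' : b i0 ≤ max (b i0) a := le_max_left _ _
  refine geom_core (D := t - a) hc1 hc2 hl (by linarith) ?_ (by linarith)
  have h3 : t ≤ b i0 + l := hmem.2
  linarith

lemma geom_left (i0 : Fin n) (a : ℝ) {c : ℝ} (hc1 : 1 < c) (hc2 : c ≤ 2)
    (b : Fin n → ℝ) {l : ℝ} (hl : 0 < l) (t : ℝ)
    (hmem : b i0 ≤ t ∧ t ≤ b i0 + l) (ht : t ≤ a + 2⁻¹ - c⁻¹) :
    2 * (min (b i0 + l) (a + 2⁻¹) - max (b i0) a) ≤ c * l := by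
  have h1 : min (b i0 + l) (a + 2⁻¹) ≤ a + 2⁻¹ := min_le_right _ _
  have h1' : min (b i0 + l) (a + 2⁻¹) ≤ b i0 + l := min_le_left _ _
  have h2 : a ≤ max (b i0) a := le_max_right _ _
  refine geom_core (D := a + 2⁻¹ - t) hc1 hc2 hl (by linarith) ?_ (by linarith)
  have h3 : b i0 ≤ t := hmem.1
  linarith

lemma mxF_le_of (i0 : Fin n) (a : ℝ) (x : Fin n → ℝ) (c : ℝ) (hc0 : 0 ≤ c)
    (hgeom : ∀ (b : Fin n → ℝ) (l : ℝ), 0 < l →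
      x ∈ (Set.univ.pi fun i => Set.Icc (b i) (b i + l)) →
      2 * (min (b i0 + l) (a + 2⁻¹) - max (b i0) a) ≤ c * l) :
    mxF (ff i0 a) x ≤ ENNReal.ofReal c := by
  refine iSup_le fun Q' => iSup_le fun hQ' => iSup_le fun hx => ?_
  obtain ⟨b, l, hl, rfl⟩ := hQ'
  rw [lintegral_absf, vol_inter, volume_cube]
  have hn1 : n - 1 + 1 = n := Nat.succ_pred_eq_of_pos (Fin.pos i0)
  set s := min (b i0 + l) (a + 2⁻¹) - max (b i0) a with hs
  have hkey : 2 * s ≤ c * l := hgeom b l hl hx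
  have e0 : ENNReal.ofReal l ^ n = ENNReal.ofReal l * ENNReal.ofReal l ^ (n - 1) := by
    conv_lhs => rw [← hn1]
    rw [pow_succ']
  have h2 : (2:ℝ≥0∞) * (ENNReal.ofReal s * ENNReal.ofReal l ^ (n - 1))
      ≤ ENNReal.ofReal c * ENNReal.ofReal l ^ n := by
    have e1 : (2:ℝ≥0∞) * (ENNReal.ofReal s * ENNReal.ofReal l ^ (n - 1))
        = ENNReal.ofReal (2 * s) * ENNReal.ofReal l ^ (n - 1) := by
      rw [ENNReal.ofReal_mul (by norm_num : (0:ℝ) ≤ 2), ENNReal.ofReal_ofNat, ← mul_assoc]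
    have e2 : ENNReal.ofReal c * ENNReal.ofReal l ^ n
        = ENNReal.ofReal (c * l) * ENNReal.ofReal l ^ (n - 1) := by
      rw [e0, ENNReal.ofReal_mul hc0, ← mul_assoc]
    rw [e1, e2]
    exact mul_le_mul_left (ENNReal.ofReal_le_ofReal hkey) _
  calc (ENNReal.ofReal l ^ n)⁻¹ * (2 * (ENNReal.ofReal s * ENNReal.ofReal l ^ (n - 1)))
      ≤ (ENNReal.ofReal l ^ n)⁻¹ * (ENNReal.ofReal c * ENNReal.ofReal l ^ n) :=
        mul_le_mul_right h2 _
    _ = ENNReal.ofReal c := by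
        rw [mul_comm (ENNReal.ofReal c), ← mul_assoc, ENNReal.inv_mul_cancel, one_mul]
        · exact pow_ne_zero _ (by simp [ENNReal.ofReal_eq_zero, not_le, hl])
        · exact pow_ne_top ENNReal.ofReal_ne_top


lemma ff_locInt (i0 : Fin n) (a : ℝ) : LocallyIntegrable (ff i0 a) volume := by
  rw [MeasureTheory.locallyIntegrable_iff]
  intro K hK
  apply Measure.integrableOn_of_bounded (M := 2) hK.measure_lt_top.ne
    ((ff_meas i0 a).aestronglyMeasurable)
  filter_upwards with x
  by_cases hx : x ∈ slab i0 a <;>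
    simp [ff, Set.indicator, hx, Real.norm_eq_abs] <;> norm_num

lemma essinf_le_one (i0 : Fin n) {a : ℝ} (ha : a = 0 ∨ a = 2⁻¹) :
    essInf (mxF (ff i0 a))
      (volume.restrict (Set.univ.pi fun _ : Fin n => Set.Icc ((0:ℝ)) (0 + 1))) ≤ 1 := by
  set Q : Set (Fin n → ℝ) := Set.univ.pi fun _ : Fin n => Set.Icc ((0:ℝ)) (0 + 1) with hQdef
  have hQmeas : MeasurableSet Q := MeasurableSet.univ_pi fun _ => measurableSet_Icc
  apply ENNReal.le_of_forall_pos_le_add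
  intro ε hε _
  set c : ℝ := 1 + min (ε : ℝ) 1 / 2 with hcdef
  have hεpos : (0:ℝ) < (ε : ℝ) := by exact_mod_cast hε
  have hminpos : 0 < min (ε : ℝ) 1 := lt_min hεpos one_pos
  have hc1 : 1 < c := by rw [hcdef]; linarith
  have hc2 : c ≤ 2 := by
    have : min (ε : ℝ) 1 ≤ 1 := min_le_right _ _
    rw [hcdef]; linarith
  have hcpos : (0:ℝ) < c := by linarith
  have hcfin : ENNReal.ofReal c ≤ 1 + (ε : ℝ≥0∞) := by
    rw [hcdef, ENNReal.ofReal_add (by norm_num) (by positivity), ENNReal.ofReal_one]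
    have h1 : ENNReal.ofReal (min (ε : ℝ) 1 / 2) ≤ ENNReal.ofReal (ε : ℝ) :=
      ENNReal.ofReal_le_ofReal (by linarith [min_le_left (ε : ℝ) 1])
    have h2 : ENNReal.ofReal (ε : ℝ) = (ε : ℝ≥0∞) := ENNReal.ofReal_coe_nnreal
    exact add_le_add_right (h2 ▸ h1) 1
  refine le_trans ?_ hcfin
  have hcinv1 : c⁻¹ < 1 := by
    rw [inv_lt_one_iff₀]
    right; exact hc1
  have hcinv0 : 0 < c⁻¹ := inv_pos.2 hcpos
  have main : ∃ r1 r2 : ℝ, r1 < r2 ∧ (0:ℝ) ≤ r1 ∧ r2 ≤ 1 ∧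
      (∀ x : Fin n → ℝ, x i0 ∈ Set.Icc r1 r2 → mxF (ff i0 a) x ≤ ENNReal.ofReal c) := by
    rcases ha with rfl | rfl
    · refine ⟨c⁻¹, 1, hcinv1, hcinv0.le, le_rfl, ?_⟩
      intro x hx
      apply mxF_le_of i0 0 x c hcpos.le
      intro b l hl hxm
      have hmem : b i0 ≤ x i0 ∧ x i0 ≤ b i0 + l := by
        have := hxm i0 (Set.mem_univ i0)
        exact ⟨this.1, this.2⟩
      exact geom_right i0 0 hc1 hc2 b hl (x i0) hmem (by simpa using hx.1)
    · refine ⟨0, 2⁻¹ + 2⁻¹ - c⁻¹, by linarith, le_rfl, by linarith, ?_⟩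
      intro x hx
      apply mxF_le_of i0 2⁻¹ x c hcpos.le
      intro b l hl hxm
      have hmem : b i0 ≤ x i0 ∧ x i0 ≤ b i0 + l := by
        have := hxm i0 (Set.mem_univ i0)
        exact ⟨this.1, this.2⟩
      exact geom_left i0 2⁻¹ hc1 hc2 b hl (x i0) hmem (by linarith [hx.2])
  obtain ⟨r1, r2, hr12, hr10, hr21, hbound⟩ := main
  apply Filter.liminf_le_of_frequently_le'
  rw [MeasureTheory.frequently_ae_iff, Measure.restrict_apply' hQmeas]
  set R : Set (Fin n → ℝ) :=
    Set.univ.pi fun i => if i = i0 then Set.Icc r1 r2 else Set.Icc (0:ℝ) (0 + 1) with hR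
  have hRsub : R ⊆ {x | mxF (ff i0 a) x ≤ ENNReal.ofReal c} ∩ Q := by
    intro x hxR
    constructor
    · apply hbound
      have := hxR i0 (Set.mem_univ i0)
      simpa using this
    · intro i _
      have hxi := hxR i (Set.mem_univ i)
      dsimp only at hxi ⊢
      by_cases hi : i = i0
      · rw [if_pos hi] at hxi
        rw [Set.mem_Icc] at hxi ⊢
        exact ⟨by linarith [hxi.1], by linarith [hxi.2]⟩
      · rwa [if_neg hi] at hxi
  have hRvol : 0 < volume R := by
    have hvols : ∀ i : Fin n,
        volume ((fun j => if j = i0 then Set.Icc r1 r2 else Set.Icc (0:ℝ) (0 + 1)) i)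
          = (if i = i0 then ENNReal.ofReal (r2 - r1) else ENNReal.ofReal 1) := by
      intro i
      by_cases hi : i = i0 <;> simp [hi, Real.volume_Icc] <;> norm_num
    rw [hR, volume_pi_pi, Finset.prod_congr rfl (fun i _ => hvols i), prod_ite_fin]
    have h1 : (0:ℝ≥0∞) < ENNReal.ofReal (r2 - r1) := by
      rw [ENNReal.ofReal_pos]; linarith
    have h2 : (0:ℝ≥0∞) < ENNReal.ofReal 1 ^ (n - 1) := by
      norm_num
    exact mul_pos h1.ne' h2.ne'
  exact (lt_of_lt_of_le hRvol (measure_mono hRsub)).ne'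

end Stmt11Aux


/-- For every weight `w` (with `0 < w(Q) < ∞` for all cubes
`Q`) there exist a locally integrable `f` with `‖f‖_BMO = 1` and `Mf` not
identically infinite, and a cube `Q`, with
`(1/w(Q)) ∫_Q (Mf(x) - essinf_Q Mf) w(x) dx ≥ 1/2`.
In particular `sup_f ‖Mf‖_{BLO_w} ≥ 1/2`, the supremum over all such `f`. -/
theorem stmt11 (n : ℕ) (hn : 0 < n) (w : (Fin n → ℝ) → ℝ)
    (hw : ∀ x, 0 ≤ w x) (hwloc : LocallyIntegrable w volume)
    (hwQ : ∀ Q : Set (Fin n → ℝ), IsCube Q → 0 < wMeas w Q ∧ wMeas w Q < ⊤) :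
    (∃ (f : (Fin n → ℝ) → ℝ) (Q : Set (Fin n → ℝ)),
        LocallyIntegrable f volume ∧ bmo f = 1 ∧ (∃ x, mxF f x ≠ ⊤) ∧ IsCube Q ∧
          (1 : ℝ≥0∞) / 2 ≤
            (wMeas w Q)⁻¹ *
              ∫⁻ x in Q,
                (mxF f x - essInf (mxF f) (volume.restrict Q)) * ENNReal.ofReal (w x)) ∧
      (1 : ℝ≥0∞) / 2 ≤
        ⨆ (f : (Fin n → ℝ) → ℝ)
          (_ : LocallyIntegrable f volume ∧ bmo f = 1 ∧ ∃ x, mxF f x ≠ ⊤),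
            bloW w (mxF f) := by
  classical
  set i0 : Fin n := ⟨0, hn⟩ with hi0
  set Q : Set (Fin n → ℝ) := Set.univ.pi fun _ : Fin n => Set.Icc ((0:ℝ)) (0 + 1) with hQdef
  have hQcube : IsCube Q := ⟨fun _ => 0, 1, one_pos, rfl⟩
  have hQmeas : MeasurableSet Q := MeasurableSet.univ_pi fun _ => measurableSet_Icc
  obtain ⟨hQpos, hQtop⟩ := hwQ Q hQcube
  have hcover : Q ⊆ (Q ∩ Stmt11Aux.slab i0 0) ∪ (Q ∩ Stmt11Aux.slab i0 2⁻¹) := by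
    intro x hx
    have hx0 := hx i0 (Set.mem_univ i0)
    dsimp only at hx0
    rw [Set.mem_Icc] at hx0
    rcases le_total (x i0) 2⁻¹ with h | h
    · exact Or.inl ⟨hx, ⟨by linarith [hx0.1], by linarith⟩⟩
    · exact Or.inr ⟨hx, ⟨by linarith, by linarith [hx0.2]⟩⟩
  have hsum : wMeas w Q ≤
      wMeas w (Q ∩ Stmt11Aux.slab i0 0) + wMeas w (Q ∩ Stmt11Aux.slab i0 2⁻¹) := by
    calc wMeas w Q
        ≤ ∫⁻ x in (Q ∩ Stmt11Aux.slab i0 0) ∪ (Q ∩ Stmt11Aux.slab i0 2⁻¹),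
            ENNReal.ofReal (w x) := lintegral_mono_set hcover
      _ ≤ _ := lintegral_union_le _ _ _
  have hsel : ∃ aa : ℝ, (aa = 0 ∨ aa = 2⁻¹) ∧
      wMeas w Q / 2 ≤ wMeas w (Q ∩ Stmt11Aux.slab i0 aa) := by
    by_contra hcon
    push_neg at hcon
    have h0 := hcon 0 (Or.inl rfl)
    have h1 := hcon 2⁻¹ (Or.inr rfl)
    have hlt : wMeas w (Q ∩ Stmt11Aux.slab i0 0) + wMeas w (Q ∩ Stmt11Aux.slab i0 2⁻¹)
        < wMeas w Q := by
      calc wMeas w (Q ∩ Stmt11Aux.slab i0 0) + wMeas w (Q ∩ Stmt11Aux.slab i0 2⁻¹)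
          < wMeas w Q / 2 + wMeas w Q / 2 := ENNReal.add_lt_add h0 h1
        _ = wMeas w Q := ENNReal.add_halves _
    exact absurd hsum (not_le.2 hlt)
  obtain ⟨a, ha, hmass⟩ := hsel
  have ha0 : 0 ≤ a := by rcases ha with rfl | rfl <;> norm_num
  have ha1 : a + 2⁻¹ ≤ 1 := by rcases ha with rfl | rfl <;> norm_num
  set f := Stmt11Aux.ff i0 a with hf
  have hloc : LocallyIntegrable f volume := Stmt11Aux.ff_locInt i0 a
  have hbmo : bmo f = 1 := Stmt11Aux.bmo_ff i0 ha0 ha1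
  have hfin : ∃ x, mxF f x ≠ ⊤ :=
    ⟨fun _ => 0, ne_top_of_le_ne_top (by simp) (Stmt11Aux.mxF_le_two i0 a _)⟩
  set m := essInf (mxF f) (volume.restrict Q) with hm
  have hm1 : m ≤ 1 := Stmt11Aux.essinf_le_one i0 ha
  have hEmeas : MeasurableSet (Q ∩ Stmt11Aux.slab i0 a) :=
    hQmeas.inter (Stmt11Aux.slab_meas i0 a)
  have hkey : wMeas w Q / 2 ≤ ∫⁻ x in Q, (mxF f x - m) * ENNReal.ofReal (w x) := by
    refine hmass.trans ?_
    calc wMeas w (Q ∩ Stmt11Aux.slab i0 a)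
        = ∫⁻ x in Q ∩ Stmt11Aux.slab i0 a, ENNReal.ofReal (w x) := rfl
      _ ≤ ∫⁻ x in Q ∩ Stmt11Aux.slab i0 a, (mxF f x - m) * ENNReal.ofReal (w x) := by
          apply lintegral_mono_ae
          apply (ae_restrict_iff' hEmeas).2
          filter_upwards with x hx
          have h2 : mxF f x = 2 := Stmt11Aux.mxF_eq_two i0 a x hx.2
          have h21 : (2:ℝ≥0∞) - 1 = 1 := by
            rw [← one_add_one_eq_two]
            exact ENNReal.add_sub_cancel_right ENNReal.one_ne_top
          have h12 : (1:ℝ≥0∞) ≤ mxF f x - m := by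
            rw [h2]
            calc (1:ℝ≥0∞) = 2 - 1 := h21.symm
              _ ≤ 2 - m := tsub_le_tsub_left hm1 2
          calc ENNReal.ofReal (w x) = 1 * ENNReal.ofReal (w x) := (one_mul _).symm
            _ ≤ (mxF f x - m) * ENNReal.ofReal (w x) := mul_le_mul_left h12 _
      _ ≤ ∫⁻ x in Q, (mxF f x - m) * ENNReal.ofReal (w x) :=
          lintegral_mono_set Set.inter_subset_left
  have hmain : (1:ℝ≥0∞)/2 ≤
      (wMeas w Q)⁻¹ * ∫⁻ x in Q, (mxF f x - m) * ENNReal.ofReal (w x) := by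
    calc (1:ℝ≥0∞)/2 = (wMeas w Q)⁻¹ * (wMeas w Q / 2) := by
          rw [div_eq_mul_inv, div_eq_mul_inv, one_mul, ← mul_assoc,
            ENNReal.inv_mul_cancel hQpos.ne' hQtop.ne, one_mul]
      _ ≤ _ := mul_le_mul_right hkey _
  refine ⟨⟨f, Q, hloc, hbmo, hfin, hQcube, hmain⟩, ?_⟩
  have hblo : (1:ℝ≥0∞)/2 ≤ bloW w (mxF f) := by
    unfold bloW
    exact le_trans hmain (le_iSup₂_of_le Q hQcube le_rfl)
  exact le_trans hblo (le_iSup₂_of_le f ⟨hloc, hbmo, hfin⟩ le_rfl)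

end
end

section
/- Let v : ℝⁿ → [0,∞) be locally integrable and let b = log⁺ v = max(0, log v). Then for every x ∈ ℝⁿ, the Hardy–Littlewood maximal functions satisfy Mb(x) ≤ log( Mv(x) + 1 ). -/
open MeasureTheory ENNReal

noncomputable section

/-- The logarithm on `ℝ≥0∞` (sending `⊤` to `⊤`; this is only used on arguments
`≥ 1`, where it is nonnegative). -/
def elog (x : ℝ≥0∞) : ℝ≥0∞ :=
  if x = ⊤ then ⊤ else ENNReal.ofReal (Real.log x.toReal)


/-- Tangent-line (Jensen) pointwise inequality. -/
lemma ptwise14 (t m : ℝ) (ht : 0 ≤ t) (hm : 0 ≤ m) :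
    max 0 (Real.log t) + m / (m + 1) ≤ Real.log (m + 1) + (m + 1)⁻¹ * t := by
  have hm1 : (0:ℝ) < m + 1 := by linarith
  have hA : max 0 (Real.log t) ≤ Real.log (1 + t) := by
    rcases eq_or_lt_of_le ht with h | h
    · simp [← h]
    · refine max_le ?_ ?_
      · exact Real.log_nonneg (by linarith)
      · exact Real.log_le_log h (by linarith)
  have hB : Real.log (1 + t) ≤ Real.log (m + 1) + (t - m) / (m + 1) := by
    have hpos : (0:ℝ) < (1 + t) / (m + 1) := div_pos (by linarith) hm1
    have := Real.log_le_sub_one_of_pos hpos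
    rw [Real.log_div (by linarith) (by linarith)] at this
    have heq : (1 + t) / (m + 1) - 1 = (t - m) / (m + 1) := by
      field_simp; ring
    linarith [this, heq.le, heq.ge]
  have hC : (t - m) / (m + 1) = (m + 1)⁻¹ * t - m / (m + 1) := by
    rw [sub_div]; ring
  linarith [hA, hB, hC.le, hC.ge]

/-- For nonnegative locally integrable `v` and
`b = log⁺ v = max (0, log v)`, one has `Mb(x) ≤ log (Mv(x) + 1)` for every
`x ∈ ℝⁿ`. -/
theorem stmt14 (n : ℕ) (v : (Fin n → ℝ) → ℝ) (hv : ∀ x, 0 ≤ v x)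
    (hvloc : LocallyIntegrable v volume) :
    ∀ x : Fin n → ℝ,
      mxF (fun y => max 0 (Real.log (v y))) x ≤ elog (mxF v x + 1) := by
  intro x
  rw [mxF]
  refine iSup_le fun Q => iSup_le fun hQ => iSup_le fun hxQ => ?_
  obtain ⟨a, l, hl, rfl⟩ := hQ
  set Q : Set (Fin n → ℝ) := Set.univ.pi fun i => Set.Icc (a i) (a i + l) with hQdef
  have hvolQ : volume Q = ENNReal.ofReal l ^ n := by
    rw [hQdef, volume_pi_pi]
    simp [Real.volume_Icc]
  have h0 : volume Q ≠ 0 := by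
    rw [hvolQ]
    simp [pow_eq_zero_iff', ENNReal.ofReal_eq_zero, not_le, hl]
  have hT : volume Q ≠ ⊤ := by
    rw [hvolQ]
    exact ENNReal.pow_ne_top ENNReal.ofReal_ne_top
  have hQc : IsCompact Q := isCompact_univ_pi fun i => isCompact_Icc
  have hInt : IntegrableOn v Q := hvloc.integrableOn_isCompact hQc
  have hvm : AEMeasurable (fun y => ENNReal.ofReal (v y)) (volume.restrict Q) :=
    ENNReal.measurable_ofReal.comp_aemeasurable hInt.aemeasurable
  by_cases hM : mxF v x = ⊤
  · have : mxF v x + 1 = ⊤ := by simp [hM]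
    simp [elog, this]
  set m : ℝ := (mxF v x).toReal with hmdef
  have hm0 : 0 ≤ m := ENNReal.toReal_nonneg
  have hMeq : mxF v x = ENNReal.ofReal m := (ENNReal.ofReal_toReal hM).symm
  have helog : elog (mxF v x + 1) = ENNReal.ofReal (Real.log (m + 1)) := by
    have hne : mxF v x + 1 ≠ ⊤ := by simp [hM]
    rw [elog, if_neg hne, ENNReal.toReal_add hM one_ne_top, ENNReal.toReal_one]
  rw [helog]
  -- the average of v over Q is at most mxF v x
  have havg : (volume Q)⁻¹ * ∫⁻ y in Q, ENNReal.ofReal |v y| ≤ mxF v x := by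
    rw [mxF]
    exact le_iSup_of_le Q (le_iSup_of_le ⟨a, l, hl, rfl⟩ (le_iSup_of_le hxQ le_rfl))
  have habs : ∀ y, |v y| = v y := fun y => abs_of_nonneg (hv y)
  have hIv : ∫⁻ y in Q, ENNReal.ofReal (v y) ≤ volume Q * ENNReal.ofReal m := by
    have h1 : ∫⁻ y in Q, ENNReal.ofReal (v y)
        = volume Q * ((volume Q)⁻¹ * ∫⁻ y in Q, ENNReal.ofReal (v y)) := by
      rw [← mul_assoc, ENNReal.mul_inv_cancel h0 hT, one_mul]
    rw [h1, ← hMeq]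
    refine mul_le_mul_right ?_ _
    simpa [habs] using havg
  set b : (Fin n → ℝ) → ℝ := fun y => max 0 (Real.log (v y)) with hbdef
  have hb0 : ∀ y, 0 ≤ b y := fun y => le_max_left _ _
  have hbabs : ∀ y, |b y| = b y := fun y => abs_of_nonneg (hb0 y)
  have hc0 : (0:ℝ) ≤ m / (m + 1) := div_nonneg hm0 (by linarith)
  -- key integrated inequality
  have hsum : (∫⁻ y in Q, ENNReal.ofReal (b y)) + volume Q * ENNReal.ofReal (m / (m + 1))
      ≤ volume Q * ENNReal.ofReal (Real.log (m + 1))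
        + ENNReal.ofReal ((m + 1)⁻¹) * ∫⁻ y in Q, ENNReal.ofReal (v y) := by
    have hL : (∫⁻ y in Q, ENNReal.ofReal (b y)) + volume Q * ENNReal.ofReal (m / (m + 1))
        = ∫⁻ y in Q, (ENNReal.ofReal (b y) + ENNReal.ofReal (m / (m + 1))) := by
      rw [lintegral_add_right _ measurable_const, lintegral_const,
        Measure.restrict_apply MeasurableSet.univ, Set.univ_inter, mul_comm]
    have hR : volume Q * ENNReal.ofReal (Real.log (m + 1))
          + ENNReal.ofReal ((m + 1)⁻¹) * ∫⁻ y in Q, ENNReal.ofReal (v y)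
        = ∫⁻ y in Q, (ENNReal.ofReal (Real.log (m + 1))
            + ENNReal.ofReal ((m + 1)⁻¹) * ENNReal.ofReal (v y)) := by
      rw [lintegral_add_left measurable_const, lintegral_const,
        Measure.restrict_apply MeasurableSet.univ, Set.univ_inter, mul_comm,
        lintegral_const_mul'' _ hvm]
    rw [hL, hR]
    refine lintegral_mono fun y => ?_
    rw [← ENNReal.ofReal_add (hb0 y) hc0]
    rw [← ENNReal.ofReal_mul (inv_nonneg.mpr (by linarith)),
      ← ENNReal.ofReal_add (Real.log_nonneg (by linarith))
        (mul_nonneg (inv_nonneg.mpr (by linarith)) (hv y))]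
    exact ENNReal.ofReal_le_ofReal (ptwise14 (v y) m (hv y) hm0)
  have hmul : ENNReal.ofReal ((m + 1)⁻¹) * (volume Q * ENNReal.ofReal m)
      = volume Q * ENNReal.ofReal (m / (m + 1)) := by
    rw [div_eq_inv_mul, ENNReal.ofReal_mul (inv_nonneg.mpr (by linarith))]
    ring
  have hfin : volume Q * ENNReal.ofReal (m / (m + 1)) ≠ ⊤ :=
    ENNReal.mul_ne_top hT ENNReal.ofReal_ne_top
  have hmain : ∫⁻ y in Q, ENNReal.ofReal (b y)
      ≤ volume Q * ENNReal.ofReal (Real.log (m + 1)) := by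
    have h2 : (∫⁻ y in Q, ENNReal.ofReal (b y)) + volume Q * ENNReal.ofReal (m / (m + 1))
        ≤ volume Q * ENNReal.ofReal (Real.log (m + 1))
          + volume Q * ENNReal.ofReal (m / (m + 1)) := by
      calc (∫⁻ y in Q, ENNReal.ofReal (b y)) + volume Q * ENNReal.ofReal (m / (m + 1))
          ≤ volume Q * ENNReal.ofReal (Real.log (m + 1))
            + ENNReal.ofReal ((m + 1)⁻¹) * ∫⁻ y in Q, ENNReal.ofReal (v y) := hsum
        _ ≤ volume Q * ENNReal.ofReal (Real.log (m + 1))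
            + ENNReal.ofReal ((m + 1)⁻¹) * (volume Q * ENNReal.ofReal m) :=
            add_le_add_right (mul_le_mul_right hIv _) _
        _ = _ := by rw [hmul]
    exact (ENNReal.add_le_add_iff_right hfin).mp h2
  calc (volume Q)⁻¹ * ∫⁻ y in Q, ENNReal.ofReal |b y|
      = (volume Q)⁻¹ * ∫⁻ y in Q, ENNReal.ofReal (b y) := by simp only [hbabs]
    _ ≤ (volume Q)⁻¹ * (volume Q * ENNReal.ofReal (Real.log (m + 1))) :=
        mul_le_mul_right hmain _
    _ = ENNReal.ofReal (Real.log (m + 1)) := by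
        rw [← mul_assoc, ENNReal.inv_mul_cancel h0 hT, one_mul]


end
end

section
/- Let v be an A₁ weight on ℝⁿ with A₁ constant [v]_{A₁}, let Q ⊂ ℝⁿ be a cube on which v(x) ≥ 1 for almost every x ∈ Q, and set b = log⁺ v. Then for almost every x ∈ Q, M b(x) ≤ log( [v]_{A₁} + 1 ) + log v(x). -/
open MeasureTheory ENNReal

noncomputable section

lemma IsCube.facts {n : ℕ} {Q : Set (Fin n → ℝ)} (h : IsCube Q) :
    MeasurableSet Q ∧ 0 < volume Q ∧ volume Q < ⊤ ∧ IsCompact Q := by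
  obtain ⟨a, l, hl, rfl⟩ := h
  refine ⟨MeasurableSet.univ_pi fun i => measurableSet_Icc, ?_, ?_,
    isCompact_univ_pi fun i => isCompact_Icc⟩
  · rw [volume_pi_pi]
    simp only [Real.volume_Icc, add_sub_cancel_left, Finset.prod_const, Finset.card_univ,
      Fintype.card_fin]
    exact ENNReal.pow_pos (ENNReal.ofReal_pos.mpr hl) n
  · rw [volume_pi_pi]
    simp only [Real.volume_Icc, add_sub_cancel_left, Finset.prod_const, Finset.card_univ,
      Fintype.card_fin]
    exact ENNReal.pow_lt_top ENNReal.ofReal_lt_top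

/-- Let `v` be an `A₁` weight with `A₁` constant `Cv`
(i.e. `Mv ≤ Cv · v` a.e.), let `Q` be a cube on which `v ≥ 1` a.e., and set
`b = log⁺ v`.  Then for a.e. `x ∈ Q`, `Mb(x) ≤ log (Cv + 1) + log (v x)`. -/
theorem stmt15 (n : ℕ) (v : (Fin n → ℝ) → ℝ) (hv : ∀ x, 0 ≤ v x)
    (hvloc : LocallyIntegrable v volume) (Cv : ℝ)
    (hA1 : ∀ᵐ x ∂(volume : Measure (Fin n → ℝ)),
      mxF v x ≤ ENNReal.ofReal (Cv * v x))
    (Q : Set (Fin n → ℝ)) (hQ : IsCube Q)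
    (hv1 : ∀ᵐ x ∂(volume.restrict Q), 1 ≤ v x) :
    ∀ᵐ x ∂(volume.restrict Q),
      mxF (fun y => max 0 (Real.log (v y))) x ≤
        ENNReal.ofReal (Real.log (Cv + 1) + Real.log (v x)) := by
  obtain ⟨hQm, hQ0, hQt, -⟩ := hQ.facts
  -- rewrite log⁺ v as log (max 1 v)
  have hb : (fun y => max 0 (Real.log (v y))) = fun y => Real.log (max 1 (v y)) := by
    funext y
    rcases le_or_gt 1 (v y) with h | h
    · rw [max_eq_right h, max_eq_right (Real.log_nonneg h)]
    · rw [max_eq_left (Real.log_nonpos (hv y) h.le), max_eq_left h.le, Real.log_one]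
  rw [hb]
  set b : (Fin n → ℝ) → ℝ := fun y => Real.log (max 1 (v y)) with hbdef
  have hbb : ∀ y, 0 ≤ b y := fun y => Real.log_nonneg (le_max_left _ _)
  have hble : ∀ y, b y ≤ v y := fun y => by
    show Real.log (max 1 (v y)) ≤ v y
    have h := Real.log_le_sub_one_of_pos (show (0:ℝ) < max 1 (v y) by positivity)
    rcases le_total 1 (v y) with h1 | h1
    · rw [max_eq_right h1] at h ⊢; linarith
    · rw [max_eq_left h1] at h ⊢; rw [Real.log_one]; exact hv y
  have hcont : Continuous fun t : ℝ => Real.log (max 1 t) :=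
    (continuous_const.max continuous_id).log fun t =>
      (lt_of_lt_of_le one_pos (le_max_left _ _)).ne'
  have hbmeas : AEStronglyMeasurable b volume :=
    hcont.comp_aestronglyMeasurable hvloc.aestronglyMeasurable
  filter_upwards [ae_restrict_of_ae hA1, hv1, ae_restrict_mem hQm] with x hMx hvx hxQ
  -- basic positivity facts for the point x
  have h1le : (1:ℝ≥0∞) ≤ mxF v x := by
    have hle : volume Q ≤ ∫⁻ y in Q, ENNReal.ofReal |v y| := by
      calc volume Q = ∫⁻ _ in Q, (1:ℝ≥0∞) := by simp
        _ ≤ _ := lintegral_mono_ae (hv1.mono fun y hy => by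
            rw [abs_of_nonneg (hv y)]; exact ENNReal.one_le_ofReal.mpr hy)
    calc (1:ℝ≥0∞) = (volume Q)⁻¹ * volume Q :=
          (ENNReal.inv_mul_cancel hQ0.ne' hQt.ne).symm
      _ ≤ (volume Q)⁻¹ * ∫⁻ y in Q, ENNReal.ofReal |v y| := mul_le_mul_right hle _
      _ ≤ mxF v x := le_iSup_of_le Q (le_iSup_of_le hQ (le_iSup_of_le hxQ le_rfl))
  have hCvx : (1:ℝ) ≤ Cv * v x := ENNReal.one_le_ofReal.mp (h1le.trans hMx)
  have hvxpos : (0:ℝ) < v x := lt_of_lt_of_le one_pos hvx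
  have hCvpos : (0:ℝ) < Cv := by nlinarith
  set c : ℝ := (Cv + 1) * v x with hc
  have hcpos : (0:ℝ) < c := by positivity
  have hlog : Real.log (Cv + 1) + Real.log (v x) = Real.log c :=
    (Real.log_mul (by positivity) hvxpos.ne').symm
  rw [hlog]
  refine iSup_le fun R => iSup_le fun hR => iSup_le fun hxR => ?_
  obtain ⟨hRm, hR0, hRt, hRc⟩ := hR.facts
  have hvint : IntegrableOn v R volume := hvloc.integrableOn_isCompact hRc
  set V : ℝ := (volume R).toReal with hV
  have hVpos : (0:ℝ) < V := ENNReal.toReal_pos hR0.ne' hRt.ne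
  -- bound the average of v over R
  have hMR' : (volume R)⁻¹ * ∫⁻ y in R, ENNReal.ofReal |v y| ≤ mxF v x :=
    le_iSup_of_le R (le_iSup_of_le hR (le_iSup_of_le hxR le_rfl))
  have hMR : (volume R)⁻¹ * ∫⁻ y in R, ENNReal.ofReal |v y| ≤ ENNReal.ofReal (Cv * v x) :=
    hMR'.trans hMx
  have habs : ∀ y, ENNReal.ofReal |v y| = ENNReal.ofReal (v y) := fun y => by
    rw [abs_of_nonneg (hv y)]
  have hIlint : ∫⁻ y in R, ENNReal.ofReal (v y) ≤ volume R * ENNReal.ofReal (Cv * v x) := by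
    calc ∫⁻ y in R, ENNReal.ofReal (v y)
        = volume R * ((volume R)⁻¹ * ∫⁻ y in R, ENNReal.ofReal |v y|) := by
          simp_rw [habs]
          rw [← mul_assoc, ENNReal.mul_inv_cancel hR0.ne' hRt.ne, one_mul]
      _ ≤ _ := mul_le_mul_right hMR _
  have hIofReal : ENNReal.ofReal (∫ y in R, v y) = ∫⁻ y in R, ENNReal.ofReal (v y) :=
    MeasureTheory.ofReal_integral_eq_lintegral_ofReal hvint
      (Filter.Eventually.of_forall fun y => hv y)
  have hIle : ∫ y in R, v y ≤ V * (Cv * v x) := by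
    have h2 : ENNReal.ofReal (∫ y in R, v y) ≤ ENNReal.ofReal (V * (Cv * v x)) := by
      rw [hIofReal, ENNReal.ofReal_mul hVpos.le, hV, ENNReal.ofReal_toReal hRt.ne]
      exact hIlint
    exact (ENNReal.ofReal_le_ofReal_iff (by nlinarith)).mp h2
  -- integrability of b on R
  have hbint : IntegrableOn b R volume :=
    hvint.mono' hbmeas.restrict (Filter.Eventually.of_forall fun y => by
      rw [Real.norm_eq_abs, abs_of_nonneg (hbb y)]
      exact hble y)
  -- pointwise bound b ≤ (1+v)/c + (log c - 1)
  have hgpt : ∀ y, b y ≤ (1 + v y) / c + (Real.log c - 1) := fun y => by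
    have hvy := hv y
    have h1 : b y ≤ Real.log (1 + v y) :=
      Real.log_le_log (by positivity) (max_le (by linarith) (by linarith))
    have h3 := Real.log_le_sub_one_of_pos (show (0:ℝ) < (1 + v y) / c by positivity)
    rw [Real.log_div (by linarith) hcpos.ne'] at h3
    linarith
  haveI : IsFiniteMeasure (volume.restrict R) :=
    ⟨by rwa [Measure.restrict_apply_univ]⟩
  have hgint1 : Integrable (fun y => (1 + v y) / c) (volume.restrict R) :=
    ((integrable_const (1:ℝ)).add hvint).div_const c
  have hgint : Integrable (fun y => (1 + v y) / c + (Real.log c - 1)) (volume.restrict R) :=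
    hgint1.add (integrable_const _)
  have hIb : ∫ y in R, b y ≤ V * Real.log c := by
    have h1 : ∫ y in R, b y ≤ ∫ y in R, ((1 + v y) / c + (Real.log c - 1)) :=
      integral_mono hbint hgint hgpt
    have h2 : ∫ y in R, ((1 + v y) / c + (Real.log c - 1))
        = (V * 1 + ∫ y in R, v y) / c + V * (Real.log c - 1) := by
      rw [integral_add hgint1 (integrable_const _), integral_div,
        integral_add (integrable_const 1) hvint, setIntegral_const, setIntegral_const,
        smul_eq_mul, smul_eq_mul]
      rfl
    have h3 : (V * 1 + ∫ y in R, v y) / c ≤ V := by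
      rw [div_le_iff₀ hcpos]
      nlinarith
    nlinarith [h1, h2.le, h2.ge]
  -- conclude in ℝ≥0∞
  have habsb : ∀ y, ENNReal.ofReal |b y| = ENNReal.ofReal (b y) := fun y => by
    rw [abs_of_nonneg (hbb y)]
  have hbor : ENNReal.ofReal (∫ y in R, b y) = ∫⁻ y in R, ENNReal.ofReal (b y) :=
    MeasureTheory.ofReal_integral_eq_lintegral_ofReal hbint
      (Filter.Eventually.of_forall hbb)
  calc (volume R)⁻¹ * ∫⁻ y in R, ENNReal.ofReal |b y|
      = (volume R)⁻¹ * ENNReal.ofReal (∫ y in R, b y) := by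
        simp_rw [habsb]; rw [hbor]
    _ ≤ (volume R)⁻¹ * ENNReal.ofReal (V * Real.log c) :=
        mul_le_mul_right (ENNReal.ofReal_le_ofReal hIb) _
    _ = ENNReal.ofReal (Real.log c) := by
        rw [ENNReal.ofReal_mul hVpos.le, hV, ENNReal.ofReal_toReal hRt.ne, ← mul_assoc,
          ENNReal.inv_mul_cancel hR0.ne' hRt.ne, one_mul]

end
end
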